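/- arXiv:1507.01548 — 5 statements merged into one kernel-verified Lean document; each statement's English description precedes it below -/
import Mathlib

section
/- Under the truncation model with both second-order conditions holding, C(t)/Ḡ(t) → 1 as t → ∞, where C(z) := F(z) − G(z) and Ḡ := 1 − G. -/
open MeasureTheory Filter Set Real

/-- Generalized tail quantile function `K^←(1 - 1/t)`. -/
noncomputable def tailQuantile (K : ℝ → ℝ) (t : ℝ) : ℝ := sInf {y : ℝ | 1 - 1 / t ≤ K y}

/-!
Take `X ~ 𝐅` and `Y ~ 𝐆` independent. By Fubini, both truncated distribution functions are
masses of regions of `{X ≤ Y}`; since `𝐆` has no atoms, `{X < Y}` and `{X ≤ Y}` differ by a null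
set, and one finds `p (F t - G t) = 𝐅(t) 𝐆̄(t)` and `p (1 - G t) = ∫_{(t,∞)} 𝐅 dμ_𝐆`. The last
integral lies between `𝐅(t) 𝐆̄(t)` and `𝐆̄(t)`, so `C(t) / Ḡ(t)` is squeezed between `𝐅(t)`
and `1`.
-/

open scoped Topology ENNReal

lemma nonneg_of_monotone_of_eq_zero {K : ℝ → ℝ} (hmono : Monotone K)
    (h0 : ∀ x ≤ (0 : ℝ), K x = 0) (x : ℝ) : 0 ≤ K x :=
  (h0 _ (min_le_right x 0)).symm.le.trans (hmono (min_le_left x 0))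

section MeasureOfCdf

variable {μ : Measure ℝ} {K : ℝ → ℝ}

lemma isProbabilityMeasure_of_measure_Iic (h : ∀ b, μ (Iic b) = ENNReal.ofReal (K b))
    (hK : Tendsto K atTop (𝓝 1)) : IsProbabilityMeasure μ := by
  refine ⟨tendsto_nhds_unique (tendsto_measure_Iic_atTop μ) ?_⟩
  simpa [h] using ENNReal.tendsto_ofReal hK

lemma nullSingletonClass_of_measure_Iic (h : ∀ b, μ (Iic b) = ENNReal.ofReal (K b))
    (hK : Continuous K) : NullSingletonClass μ := by
  refine ⟨fun x => le_antisymm ?_ bot_le⟩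
  have hlim : Tendsto (fun y => ENNReal.ofReal (K x) - ENNReal.ofReal (K y)) (𝓝[<] x)
      (𝓝 (ENNReal.ofReal (K x) - ENNReal.ofReal (K x))) :=
    ENNReal.Tendsto.sub tendsto_const_nhds
      (ENNReal.tendsto_ofReal ((hK.tendsto x).mono_left nhdsWithin_le_nhds))
      (Or.inl ENNReal.ofReal_ne_top)
  rw [tsub_self] at hlim
  refine ge_of_tendsto hlim ?_
  filter_upwards [self_mem_nhdsWithin] with y (hy : y < x)
  calc μ {x} ≤ μ (Iic x \ Iic y) := measure_mono fun z (hz : z = x) => by simp [hz, hy]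
    _ = ENNReal.ofReal (K x) - ENNReal.ofReal (K y) := by
      rw [measure_sdiff (Iic_subset_Iic.2 hy.le) measurableSet_Iic.nullMeasurableSet
        (by simp [h]), h, h]

end MeasureOfCdf

lemma tendsto_measureReal_Iic_atTop (μ : Measure ℝ) [IsProbabilityMeasure μ] :
    Tendsto (fun t => μ.real (Iic t)) atTop (𝓝 1) := by
  have h := tendsto_measure_Iic_atTop μ
  rw [measure_univ] at h
  simpa [measureReal_def, Function.comp_def] using
    (ENNReal.tendsto_toReal ENNReal.one_ne_top).comp h

lemma setIntegral_Ioi_eq_Ioc_add_Ioi {f : ℝ → ℝ} {ρ : Measure ℝ} {a b : ℝ}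
    (hf : IntegrableOn f (Ioi a) ρ) (hab : a ≤ b) :
    ∫ x in Ioi a, f x ∂ρ = ∫ x in Ioc a b, f x ∂ρ + ∫ x in Ioi b, f x ∂ρ := by
  rw [← intervalIntegral.integral_of_le hab,
    intervalIntegral.integral_interval_add_Ioi hf (hf.mono_set (Ioi_subset_Ioi hab))]

/-- Both sides are the `μ ⊗ ν`-mass of `{(z, w) | a < w, z ≤ w}`, sliced along `w` and along `z`;
since `ν` has no atoms, the slice `{w | z ≤ w}` has the mass of `Ioi z`. -/
lemma lintegral_Ioi_measure_Iic (μ ν : Measure ℝ) [SFinite μ] [SFinite ν]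
    [NullSingletonClass ν] (a : ℝ) :
    ∫⁻ w in Ioi a, μ (Iic w) ∂ν = μ (Iic a) * ν (Ioi a) + ∫⁻ z in Ioi a, ν (Ioi z) ∂μ := by
  have hupper : MeasurableSet {q : ℝ × ℝ | a < q.2 ∧ q.1 ≤ q.2} :=
    (measurableSet_lt measurable_const measurable_snd).inter
      (measurableSet_le measurable_fst measurable_snd)
  have hlower : MeasurableSet {q : ℝ × ℝ | a < q.1 ∧ q.1 ≤ q.2} :=
    (measurableSet_lt measurable_const measurable_fst).inter
      (measurableSet_le measurable_fst measurable_snd)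
  have hleft : ∫⁻ w in Ioi a, μ (Iic w) ∂ν = μ.prod ν {q | a < q.2 ∧ q.1 ≤ q.2} := by
    rw [Measure.prod_apply_symm hupper, ← lintegral_indicator measurableSet_Ioi]
    congr 1
    ext w
    by_cases hw : a < w <;> simp [indicator, hw, preimage, Iic]
  have hright : μ.prod ν {q | a < q.1 ∧ q.1 ≤ q.2} = ∫⁻ z in Ioi a, ν (Ioi z) ∂μ := by
    rw [Measure.prod_apply hlower, ← lintegral_indicator measurableSet_Ioi]
    congr 1
    ext z
    by_cases hz : a < z <;> simp [indicator, hz, preimage, measure_congr Ioi_ae_eq_Ici, Ici]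
  have hsplit : {q : ℝ × ℝ | a < q.2 ∧ q.1 ≤ q.2}
      = Iic a ×ˢ Ioi a ∪ {q | a < q.1 ∧ q.1 ≤ q.2} := by
    ext ⟨z, w⟩
    simp only [mem_ofPred_eq, mem_union, mem_prod, mem_Iic, mem_Ioi]
    constructor
    · rintro ⟨haw, hzw⟩
      exact (le_or_gt z a).imp (fun hza => ⟨hza, haw⟩) fun haz => ⟨haz, hzw⟩
    · rintro (⟨hza, haw⟩ | ⟨haz, hzw⟩)
      exacts [⟨haw, hza.trans haw.le⟩, ⟨haz.trans_le hzw, hzw⟩]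
  have hdisj : Disjoint (Iic a ×ˢ Ioi a) {q : ℝ × ℝ | a < q.1 ∧ q.1 ≤ q.2} :=
    disjoint_left.2 fun q hq hq' => (not_lt.2 hq.1) hq'.1
  rw [hleft, hsplit, measure_union hdisj hlower, Measure.prod_prod, hright]

section FiniteMeasures

variable {μ ν : Measure ℝ} [IsFiniteMeasure μ] [IsFiniteMeasure ν]

lemma integrableOn_measureReal_Iic (s : Set ℝ) : IntegrableOn (fun w => μ.real (Iic w)) s ν := by
  refine (Integrable.of_bound ?_ (μ.real univ) (ae_of_all _ fun _ => ?_)).integrableOn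
  · exact (Monotone.measurable fun _ _ h =>
      measureReal_mono (Iic_subset_Iic.2 h)).aestronglyMeasurable
  · simpa [abs_of_nonneg measureReal_nonneg] using measureReal_mono (subset_univ _)

lemma integrableOn_measureReal_Ioi (s : Set ℝ) : IntegrableOn (fun z => ν.real (Ioi z)) s μ := by
  refine (Integrable.of_bound ?_ (ν.real univ) (ae_of_all _ fun _ => ?_)).integrableOn
  · exact (Antitone.measurable fun _ _ h =>
      measureReal_mono (Ioi_subset_Ioi h)).aestronglyMeasurable
  · simpa [abs_of_nonneg measureReal_nonneg] using measureReal_mono (subset_univ _)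

lemma setIntegral_Ioi_measureReal_Iic_le (t : ℝ) :
    ∫ w in Ioi t, μ.real (Iic w) ∂ν ≤ μ.real univ * ν.real (Ioi t) := by
  calc ∫ w in Ioi t, μ.real (Iic w) ∂ν ≤ ∫ _ in Ioi t, μ.real univ ∂ν :=
        setIntegral_mono (integrableOn_measureReal_Iic _) (integrableOn_const (by finiteness))
          fun _ => measureReal_mono (subset_univ _)
    _ = μ.real univ * ν.real (Ioi t) := by simp [mul_comm]

variable [NullSingletonClass ν]

lemma integral_Ioi_measureReal_Iic (a : ℝ) :
    ∫ w in Ioi a, μ.real (Iic w) ∂ν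
      = μ.real (Iic a) * ν.real (Ioi a) + ∫ z in Ioi a, ν.real (Ioi z) ∂μ := by
  have hIic : Measurable fun w => μ (Iic w) :=
    Monotone.measurable fun _ _ h => measure_mono (Iic_subset_Iic.2 h)
  have hIoi : Measurable fun z => ν (Ioi z) :=
    Antitone.measurable fun _ _ h => measure_mono (Ioi_subset_Ioi h)
  have hfin : ∫⁻ z in Ioi a, ν (Ioi z) ∂μ ≠ ∞ :=
    (setLIntegral_lt_top_of_le_nnreal (measure_ne_top μ _) ⟨(ν univ).toNNReal, fun z _ => by
      rw [ENNReal.coe_toNNReal (measure_ne_top ν _)]; exact measure_mono (subset_univ _)⟩).ne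
  simp only [measureReal_def]
  rw [integral_toReal hIic.aemeasurable (ae_of_all _ fun _ => measure_lt_top _ _),
    integral_toReal hIoi.aemeasurable (ae_of_all _ fun _ => measure_lt_top _ _),
    lintegral_Ioi_measure_Iic, ENNReal.toReal_add (by finiteness) hfin, ENNReal.toReal_mul]

lemma measureReal_Iic_mul_le_setIntegral_Ioi (t : ℝ) :
    μ.real (Iic t) * ν.real (Ioi t) ≤ ∫ w in Ioi t, μ.real (Iic w) ∂ν := by
  rw [integral_Ioi_measureReal_Iic t, le_add_iff_nonneg_right]
  exact setIntegral_nonneg measurableSet_Ioi fun _ _ => measureReal_nonneg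

lemma setIntegral_Ioi_measureReal_Iic_of_Iic_zero (hμ0 : μ (Iic 0) = 0) :
    ∫ w in Ioi 0, μ.real (Iic w) ∂ν = ∫ z in Ioi 0, ν.real (Ioi z) ∂μ := by
  rw [integral_Ioi_measureReal_Iic, measureReal_def, hμ0, ENNReal.toReal_zero, zero_mul, zero_add]

lemma setIntegral_Ioc_measureReal_Ioi_sub (hμ0 : μ (Iic 0) = 0) {t : ℝ} (ht : 0 ≤ t) :
    ∫ z in Ioc 0 t, ν.real (Ioi z) ∂μ - ∫ w in Ioc 0 t, μ.real (Iic w) ∂ν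
      = μ.real (Iic t) * ν.real (Ioi t) := by
  have h0 := setIntegral_Ioi_measureReal_Iic_of_Iic_zero (ν := ν) hμ0
  rw [setIntegral_Ioi_eq_Ioc_add_Ioi (integrableOn_measureReal_Iic _) ht,
    setIntegral_Ioi_eq_Ioc_add_Ioi (integrableOn_measureReal_Ioi _) ht] at h0
  linarith [integral_Ioi_measureReal_Iic (μ := μ) (ν := ν) t]

end FiniteMeasures

theorem tendsto_truncated_cdf_sub_div_one_sub {μ ν : Measure ℝ} [IsProbabilityMeasure μ]
    [IsFiniteMeasure ν] [NullSingletonClass ν] (hμ0 : μ (Iic 0) = 0)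
    (hν : ∀ t, 0 < ν.real (Ioi t)) (p : ℝ) (hp : p = ∫ z in Ioi 0, ν.real (Ioi z) ∂μ)
    (F G : ℝ → ℝ) (hF : ∀ x, F x = p⁻¹ * ∫ z in Ioc 0 x, ν.real (Ioi z) ∂μ)
    (hG : ∀ y, G y = p⁻¹ * ∫ w in Ioc 0 y, μ.real (Iic w) ∂ν) :
    Tendsto (fun t => (F t - G t) / (1 - G t)) atTop (𝓝 1) := by
  have hratio : ∀ᶠ t in atTop,
      μ.real (Iic t) ≤ (F t - G t) / (1 - G t) ∧ (F t - G t) / (1 - G t) ≤ 1 := by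
    filter_upwards [eventually_ge_atTop 0,
      (tendsto_measureReal_Iic_atTop μ).eventually (lt_mem_nhds one_pos)] with t ht hμt
    have hJ := measureReal_Iic_mul_le_setIntegral_Ioi (μ := μ) (ν := ν) t
    have hJpos := (mul_pos hμt (hν t)).trans_le hJ
    have hpJ : p = ∫ w in Ioc 0 t, μ.real (Iic w) ∂ν + ∫ w in Ioi t, μ.real (Iic w) ∂ν := by
      rw [hp, ← setIntegral_Ioi_measureReal_Iic_of_Iic_zero hμ0,
        setIntegral_Ioi_eq_Ioc_add_Ioi (integrableOn_measureReal_Iic _) ht]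
    have hp0 : p ≠ 0 := by
      rw [hpJ]
      exact (add_pos_of_nonneg_of_pos (setIntegral_nonneg measurableSet_Ioc
        fun _ _ => measureReal_nonneg) hJpos).ne'
    have hnum : F t - G t = p⁻¹ * (μ.real (Iic t) * ν.real (Ioi t)) := by
      rw [hF, hG, ← setIntegral_Ioc_measureReal_Ioi_sub hμ0 ht]
      ring
    have hden : 1 - G t = p⁻¹ * ∫ w in Ioi t, μ.real (Iic w) ∂ν := by
      rw [hG]
      field_simp
      linarith
    rw [hnum, hden, mul_div_mul_left _ _ (inv_ne_zero hp0), le_div_iff₀ hJpos, div_le_one hJpos]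
    refine ⟨?_, hJ⟩
    simpa using mul_le_mul_of_nonneg_left (setIntegral_Ioi_measureReal_Iic_le (μ := μ) t)
      (measureReal_nonneg (s := Iic t))
  exact tendsto_of_tendsto_of_tendsto_of_le_of_le' (tendsto_measureReal_Iic_atTop μ)
    tendsto_const_nhds (hratio.mono fun _ h => h.1) (hratio.mono fun _ h => h.2)

theorem C_over_Gbar_tendsto_one_general
    (FF GG : ℝ → ℝ)
    (hFFmono : Monotone FF)
    (hFF0 : ∀ x ≤ (0 : ℝ), FF x = 0) (hFFtop : Tendsto FF atTop (nhds 1))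
    (hGGmono : Monotone GG) (hGGcont : Continuous GG)
    (hGG0 : ∀ x ≤ (0 : ℝ), GG x = 0) (hGGtop : Tendsto GG atTop (nhds 1))
    (hGGlt : ∀ z : ℝ, GG z < 1)
    -- observed marginals
    (μF μG : Measure ℝ)
    (hμF : ∀ b, μF (Set.Iic b) = ENNReal.ofReal (FF b))
    (hμG : ∀ b, μG (Set.Iic b) = ENNReal.ofReal (GG b))
    (p : ℝ) (hp : p = ∫ z in Set.Ioi (0 : ℝ), (1 - GG z) ∂μF)
    (F G : ℝ → ℝ)
    (hF : ∀ x, F x = p⁻¹ * ∫ z in Set.Ioc (0 : ℝ) x, (1 - GG z) ∂μF)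
    (hG : ∀ y, G y = p⁻¹ * ∫ z in Set.Ioc (0 : ℝ) y, FF z ∂μG) :
    Tendsto (fun t => (F t - G t) / (1 - G t)) atTop (nhds 1) := by
  have := isProbabilityMeasure_of_measure_Iic hμF hFFtop
  have := isProbabilityMeasure_of_measure_Iic hμG hGGtop
  have := nullSingletonClass_of_measure_Iic hμG hGGcont
  have hFF : ∀ w, FF w = μF.real (Iic w) := fun w => by
    rw [measureReal_def, hμF, ENNReal.toReal_ofReal (nonneg_of_monotone_of_eq_zero hFFmono hFF0 w)]
  have hGG : ∀ z, 1 - GG z = μG.real (Ioi z) := fun z => by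
    rw [← compl_Iic, probReal_compl_eq_one_sub measurableSet_Iic, measureReal_def, hμG,
      ENNReal.toReal_ofReal (nonneg_of_monotone_of_eq_zero hGGmono hGG0 z)]
  simp only [hFF, hGG] at hp hF hG
  exact tendsto_truncated_cdf_sub_div_one_sub (by rw [hμF, hFF0 0 le_rfl, ENNReal.ofReal_zero])
    (fun t => hGG t ▸ sub_pos.2 (hGGlt t)) p hp F G hF hG

/-- Under the truncation model with both second-order conditions holding,
`C(t)/Ḡ(t) → 1` as `t → ∞`, where `C := F − G` and `Ḡ := 1 − G`. -/
theorem C_over_Gbar_tendsto_one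
    (FF GG : ℝ → ℝ) (γ₁ γ₂ : ℝ) (hγ₁ : 0 < γ₁) (hγ₂ : 0 < γ₂)
    (hFFmono : Monotone FF) (hFFcont : Continuous FF)
    (hFF0 : ∀ x ≤ (0 : ℝ), FF x = 0) (hFFtop : Tendsto FF atTop (nhds 1))
    (hGGmono : Monotone GG) (hGGcont : Continuous GG)
    (hGG0 : ∀ x ≤ (0 : ℝ), GG x = 0) (hGGtop : Tendsto GG atTop (nhds 1))
    (hFFlt : ∀ z : ℝ, FF z < 1) (hGGlt : ∀ z : ℝ, GG z < 1)
    (hRVF : ∀ x > (0 : ℝ),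
      Tendsto (fun z => (1 - FF (x * z)) / (1 - FF z)) atTop (nhds (x ^ (-(1 / γ₁)))))
    (hRVG : ∀ x > (0 : ℝ),
      Tendsto (fun z => (1 - GG (x * z)) / (1 - GG z)) atTop (nhds (x ^ (-(1 / γ₂)))))
    -- second-order condition for 𝐅
    (τ₁ : ℝ) (hτ₁ : τ₁ < 0) (AF : ℝ → ℝ) (hAF0 : Tendsto AF atTop (nhds 0))
    (hAFsign : (∀ᶠ t in atTop, 0 < AF t) ∨ (∀ᶠ t in atTop, AF t < 0))
    (hAFrv : ∀ x > (0 : ℝ), Tendsto (fun t => |AF (x * t)| / |AF t|) atTop (nhds (x ^ τ₁)))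
    (hSOF : ∀ x > (0 : ℝ),
      Tendsto (fun t => (tailQuantile FF (t * x) / tailQuantile FF t - x ^ γ₁) / AF t)
        atTop (nhds (x ^ γ₁ * ((x ^ τ₁ - 1) / τ₁))))
    -- second-order condition for 𝐆
    (τ₂ : ℝ) (hτ₂ : τ₂ < 0) (AG : ℝ → ℝ) (hAG0 : Tendsto AG atTop (nhds 0))
    (hAGsign : (∀ᶠ t in atTop, 0 < AG t) ∨ (∀ᶠ t in atTop, AG t < 0))
    (hAGrv : ∀ x > (0 : ℝ), Tendsto (fun t => |AG (x * t)| / |AG t|) atTop (nhds (x ^ τ₂)))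
    (hSOG : ∀ x > (0 : ℝ),
      Tendsto (fun t => (tailQuantile GG (t * x) / tailQuantile GG t - x ^ γ₂) / AG t)
        atTop (nhds (x ^ γ₂ * ((x ^ τ₂ - 1) / τ₂))))
    -- observed marginals
    (μF μG : Measure ℝ)
    (hμF : ∀ b, μF (Set.Iic b) = ENNReal.ofReal (FF b))
    (hμG : ∀ b, μG (Set.Iic b) = ENNReal.ofReal (GG b))
    (p : ℝ) (hp : p = ∫ z in Set.Ioi (0 : ℝ), (1 - GG z) ∂μF) (hppos : 0 < p)
    (F G : ℝ → ℝ)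
    (hF : ∀ x, F x = p⁻¹ * ∫ z in Set.Ioc (0 : ℝ) x, (1 - GG z) ∂μF)
    (hG : ∀ y, G y = p⁻¹ * ∫ z in Set.Ioc (0 : ℝ) y, FF z ∂μG) :
    Tendsto (fun t => (F t - G t) / (1 - G t)) atTop (nhds 1) :=
  C_over_Gbar_tendsto_one_general FF GG hFFmono hFF0 hFFtop hGGmono hGGcont hGG0 hGGtop hGGlt μF μG
    hμF hμG p hp F G hF hG
end

section
/- Under the truncation model with both second-order conditions holding, for each 0 < ν ≤ 1 one has t^{1/ν}·C(U_F(t)) → ∞ as t → ∞, where C(z) := F(z) − G(z) and U_F(t) := F^←(1−1/t) is the tail quantile function of F. -/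
open MeasureTheory Filter Set Real

/-!
Fubini on `{0 < x ≤ y ≤ z}`, whose diagonal part is null because `𝐆` is continuous, gives the
exact formula `F z - G z = p⁻¹ 𝐅(z) 𝐆̄(z)`, while
`1 - F z = p⁻¹ ∫_{(z,∞)} 𝐆̄ dμ_𝐅 ≤ p⁻¹ 𝐆̄(z) 𝐅̄(z)`.
Hence `(F - G) / (1 - F) ≥ 𝐅 / 𝐅̄ → ∞`. Since `F` is continuous, `1 - F (U_F t) = 1 / t`, so
`t · (F - G)(U_F t) → ∞`, and `t ^ (1 / ν) ≥ t` for `t ≥ 1`, `ν ≤ 1`.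
-/

open Topology

structure IsLifetimeCDF (μ : Measure ℝ) (K : ℝ → ℝ) : Prop where
  mono : Monotone K
  eq_zero_of_nonpos : ∀ x ≤ 0, K x = 0
  tendsto_atTop : Tendsto K atTop (𝓝 1)
  measure_Iic : ∀ b, μ (Iic b) = ENNReal.ofReal (K b)

namespace IsLifetimeCDF

variable {μ : Measure ℝ} {K : ℝ → ℝ}

lemma nonneg (h : IsLifetimeCDF μ K) (x : ℝ) : 0 ≤ K x := by
  rcases le_total x 0 with hx | hx
  · exact (h.eq_zero_of_nonpos x hx).ge
  · exact (h.eq_zero_of_nonpos 0 le_rfl).symm.le.trans (h.mono hx)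

lemma le_one (h : IsLifetimeCDF μ K) (x : ℝ) : K x ≤ 1 :=
  h.mono.ge_of_tendsto h.tendsto_atTop x

lemma isProbabilityMeasure (h : IsLifetimeCDF μ K) : IsProbabilityMeasure μ := by
  refine ⟨tendsto_nhds_unique (tendsto_measure_Iic_atTop μ) ?_⟩
  simp_rw [h.measure_Iic, ← ENNReal.ofReal_one]
  exact (ENNReal.continuous_ofReal.tendsto 1).comp h.tendsto_atTop

lemma measure_Ioc (h : IsLifetimeCDF μ K) (a b : ℝ) :
    μ (Ioc a b) = ENNReal.ofReal (K b - K a) := by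
  have := h.isProbabilityMeasure
  rcases le_total a b with hab | hab
  · rw [← Iic_sdiff_Iic, measure_sdiff (Iic_subset_Iic.2 hab) nullMeasurableSet_Iic
      (measure_ne_top _ _), h.measure_Iic, h.measure_Iic, ENNReal.ofReal_sub _ (h.nonneg a)]
  · rw [Ioc_eq_empty (not_lt.2 hab), measure_empty,
      ENNReal.ofReal_of_nonpos (sub_nonpos.2 (h.mono hab))]

lemma measure_Ioi (h : IsLifetimeCDF μ K) (a : ℝ) :
    μ (Ioi a) = ENNReal.ofReal (1 - K a) := by
  have := h.isProbabilityMeasure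
  rw [← compl_Iic, prob_compl_eq_one_sub measurableSet_Iic, h.measure_Iic,
    ENNReal.ofReal_sub _ (h.nonneg a), ENNReal.ofReal_one]

lemma nullSingletonClass (h : IsLifetimeCDF μ K) (hc : Continuous K) : NullSingletonClass μ := by
  refine ⟨fun x => nonpos_iff_eq_zero.1 ?_⟩
  have hjump : Tendsto (fun ε => ENNReal.ofReal (K x - K (x - ε))) (𝓝[>] 0) (𝓝 0) := by
    have : Continuous fun ε => ENNReal.ofReal (K x - K (x - ε)) :=
      ENNReal.continuous_ofReal.comp (by fun_prop)
    simpa using (this.tendsto 0).mono_left nhdsWithin_le_nhds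
  refine ge_of_tendsto hjump ?_
  filter_upwards [self_mem_nhdsWithin] with ε (hε : 0 < ε)
  rw [← h.measure_Ioc]
  exact measure_mono (singleton_subset_iff.2 ⟨by linarith, le_rfl⟩)

lemma integrable_one_sub (h : IsLifetimeCDF μ K) (ν : Measure ℝ) [IsFiniteMeasure ν] :
    Integrable (fun x => 1 - K x) ν :=
  .of_bound (h.mono.measurable.const_sub 1).aestronglyMeasurable 1 (ae_of_all _ fun x => by
    rw [Real.norm_eq_abs, abs_le]; constructor <;> linarith [h.nonneg x, h.le_one x])

end IsLifetimeCDF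

lemma measure_prod_diagonal_eq_zero {μ ν : Measure ℝ} [SFinite ν] [NullSingletonClass ν] :
    (μ.prod ν) {q | q.1 = q.2} = 0 := by
  rw [Measure.prod_apply (measurableSet_eq_fun measurable_fst measurable_snd)]
  simp [Set.preimage]

lemma lintegral_measure_Ioc_eq {μ ν : Measure ℝ} [SFinite μ] [SFinite ν] [NullSingletonClass ν]
    (a b : ℝ) : ∫⁻ x in Ioc a b, ν (Ioc x b) ∂μ = ∫⁻ y in Ioc a b, μ (Ioc a y) ∂ν := by
  let S₁ : Set (ℝ × ℝ) := {q | a < q.1 ∧ q.1 < q.2 ∧ q.2 ≤ b}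
  let S₂ : Set (ℝ × ℝ) := {q | a < q.1 ∧ q.1 ≤ q.2 ∧ q.2 ≤ b}
  have hS₁ : (μ.prod ν) S₁ = ∫⁻ x in Ioc a b, ν (Ioc x b) ∂μ := by
    rw [Measure.prod_apply (by measurability), ← lintegral_indicator measurableSet_Ioc]
    congr 1 with x
    by_cases hx : x ∈ Ioc a b
    · rw [indicator_of_mem hx]
      congr 1 with y
      simp [S₁, hx.1]
    · rw [indicator_of_notMem hx]
      exact measure_mono_null (fun y hy => (hx ⟨hy.1, hy.2.1.le.trans hy.2.2⟩).elim) measure_empty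
  have hS₂ : (μ.prod ν) S₂ = ∫⁻ y in Ioc a b, μ (Ioc a y) ∂ν := by
    rw [Measure.prod_apply_symm (by measurability), ← lintegral_indicator measurableSet_Ioc]
    congr 1 with y
    by_cases hy : y ∈ Ioc a b
    · rw [indicator_of_mem hy]
      congr 1 with x
      simp [S₂, hy.2]
    · rw [indicator_of_notMem hy]
      exact measure_mono_null (fun x hx => (hy ⟨hx.1.trans_le hx.2.1, hx.2.2⟩).elim) measure_empty
  have hS₂S₁ : S₂ \ S₁ ⊆ {q | q.1 = q.2} := fun q ⟨h₂, h₁⟩ =>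
    h₂.2.1.eq_of_not_lt fun hlt => h₁ ⟨h₂.1, hlt, h₂.2.2⟩
  rw [← hS₁, ← hS₂]
  exact le_antisymm (measure_mono fun q h => ⟨h.1, h.2.1.le, h.2.2⟩)
    (measure_mono_ae (ae_le_set.2 (measure_mono_null hS₂S₁ measure_prod_diagonal_eq_zero)))

lemma continuous_setIntegral_Ioc {μ : Measure ℝ} [NullSingletonClass μ] {a : ℝ} (hμ : μ (Iic a) = 0)
    {f : ℝ → ℝ} (hf : Integrable f μ) : Continuous fun x => ∫ t in Ioc a x, f t ∂μ := by
  convert hf.continuous_primitive a using 2 with x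
  rcases le_total a x with hx | hx
  · rw [intervalIntegral.integral_of_le hx]
  · rw [intervalIntegral.integral_of_ge hx, Ioc_eq_empty_of_le hx,
      Measure.restrict_eq_zero.2 (measure_mono_null Ioc_subset_Iic_self hμ)]
    simp

lemma monotone_setIntegral_Ioc {μ : Measure ℝ} {f : ℝ → ℝ} (hf : Integrable f μ) (hf0 : 0 ≤ f)
    (a : ℝ) : Monotone fun x => ∫ t in Ioc a x, f t ∂μ := fun _ _ hxy =>
  setIntegral_mono_set hf.integrableOn (ae_of_all _ fun t => hf0 t)
    (Ioc_subset_Ioc_right hxy).eventuallyLE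

lemma setIntegral_Ioc_add_setIntegral_Ioi {μ : Measure ℝ} {f : ℝ → ℝ} (hf : Integrable f μ)
    {a x : ℝ} (hax : a ≤ x) :
    ∫ t in Ioc a x, f t ∂μ + ∫ t in Ioi x, f t ∂μ = ∫ t in Ioi a, f t ∂μ := by
  rw [← setIntegral_union Ioc_disjoint_Ioi_same measurableSet_Ioi hf.integrableOn hf.integrableOn,
    Ioc_union_Ioi_eq_Ioi hax]

lemma tendsto_div_one_sub_atTop {α : Type*} {l : Filter α} {f : α → ℝ} (hf : Tendsto f l (𝓝 1))
    (hlt : ∀ᶠ x in l, f x < 1) : Tendsto (fun x => f x / (1 - f x)) l atTop := by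
  have hgap : Tendsto (fun x => 1 - f x) l (𝓝[>] 0) :=
    tendsto_nhdsWithin_iff.2 ⟨by simpa using (tendsto_const_nhds (x := (1 : ℝ))).sub hf,
      hlt.mono fun x hx => sub_pos.2 hx⟩
  simp_rw [div_eq_mul_inv]
  exact hf.pos_mul_atTop one_pos hgap.inv_tendsto_nhdsGT_zero

section TailQuantile

variable {K : ℝ → ℝ}

lemma pos_of_one_sub_one_div_le (h0 : ∀ x ≤ 0, K x = 0) {t y : ℝ} (ht : 1 < t)
    (hy : 1 - 1 / t ≤ K y) : 0 < y := by
  have : 1 / t < 1 := (div_lt_one (by linarith)).2 ht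
  exact lt_of_not_ge fun hy0 => by linarith [h0 y hy0]

lemma tailQuantile_le (h0 : ∀ x ≤ 0, K x = 0) {t y : ℝ} (ht : 1 < t) (hy : 1 - 1 / t ≤ K y) :
    tailQuantile K t ≤ y :=
  csInf_le ⟨0, fun _ hz => (pos_of_one_sub_one_div_le h0 ht hz).le⟩ hy

lemma le_apply_tailQuantile (hc : Continuous K) (h0 : ∀ x ≤ 0, K x = 0)
    (h1 : Tendsto K atTop (𝓝 1)) {t : ℝ} (ht : 1 < t) : 1 - 1 / t ≤ K (tailQuantile K t) := by
  have hne : {y | 1 - 1 / t ≤ K y}.Nonempty :=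
    (h1.eventually (eventually_ge_nhds (by linarith [one_div_pos.2 (zero_lt_one.trans ht)]))).exists
  exact (isClosed_le continuous_const hc).csInf_mem hne
    ⟨0, fun _ hy => (pos_of_one_sub_one_div_le h0 ht hy).le⟩

lemma apply_tailQuantile (hc : Continuous K) (h0 : ∀ x ≤ 0, K x = 0)
    (h1 : Tendsto K atTop (𝓝 1)) {t : ℝ} (ht : 1 < t) : K (tailQuantile K t) = 1 - 1 / t := by
  refine le_antisymm (not_lt.1 fun hlt => ?_) (le_apply_tailQuantile hc h0 h1 ht)
  -- by continuity, points just left of the infimum would still lie in the level set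
  obtain ⟨y, hy, hyt⟩ := ((hc.tendsto _).eventually (lt_mem_nhds hlt)
    |>.filter_mono nhdsWithin_le_nhds
    |>.and (self_mem_nhdsWithin (s := Iio (tailQuantile K t)))).exists
  exact (not_le.2 hyt) (tailQuantile_le h0 ht hy.le)

lemma tailQuantile_pos (hc : Continuous K) (h0 : ∀ x ≤ 0, K x = 0)
    (h1 : Tendsto K atTop (𝓝 1)) {t : ℝ} (ht : 1 < t) : 0 < tailQuantile K t :=
  pos_of_one_sub_one_div_le h0 ht (le_apply_tailQuantile hc h0 h1 ht)

lemma tendsto_tailQuantile_atTop (hm : Monotone K) (hc : Continuous K) (h0 : ∀ x ≤ 0, K x = 0)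
    (h1 : Tendsto K atTop (𝓝 1)) (hlt : ∀ x, K x < 1) : Tendsto (tailQuantile K) atTop atTop := by
  refine tendsto_atTop.2 fun M => ?_
  have hlevel : Tendsto (fun t : ℝ => 1 - 1 / t) atTop (𝓝 1) := by
    simpa using (tendsto_const_nhds (x := (1 : ℝ))).sub tendsto_inv_atTop_zero
  filter_upwards [hlevel.eventually (eventually_gt_nhds (hlt M)), eventually_gt_atTop 1]
    with t hMt ht
  exact (hm.reflect_lt (hMt.trans_eq (apply_tailQuantile hc h0 h1 ht).symm)).le

end TailQuantile

/-- With `μ = μ_𝐅` and `g = 𝐆̄` this is the paper's `F`. -/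
noncomputable def weightedCDF (μ : Measure ℝ) (g : ℝ → ℝ) (x : ℝ) : ℝ :=
  (∫ z in Ioi 0, g z ∂μ)⁻¹ * ∫ z in Ioc 0 x, g z ∂μ

section WeightedCDF

variable {μ : Measure ℝ} {g : ℝ → ℝ}

lemma weightedCDF_of_nonpos {x : ℝ} (hx : x ≤ 0) : weightedCDF μ g x = 0 := by
  simp [weightedCDF, Ioc_eq_empty_of_le hx]

lemma monotone_weightedCDF (hg : Integrable g μ) (hg0 : 0 ≤ g) : Monotone (weightedCDF μ g) :=
  fun _ _ hxy => mul_le_mul_of_nonneg_left (monotone_setIntegral_Ioc hg hg0 0 hxy)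
    (inv_nonneg.2 (setIntegral_nonneg measurableSet_Ioi fun z _ => hg0 z))

lemma continuous_weightedCDF [NullSingletonClass μ] (hμ : μ (Iic 0) = 0) (hg : Integrable g μ) :
    Continuous (weightedCDF μ g) :=
  continuous_const.mul (continuous_setIntegral_Ioc hμ hg)

lemma one_sub_weightedCDF (hg : Integrable g μ) (hp : ∫ z in Ioi 0, g z ∂μ ≠ 0) {x : ℝ}
    (hx : 0 ≤ x) :
    1 - weightedCDF μ g x = (∫ z in Ioi 0, g z ∂μ)⁻¹ * ∫ z in Ioi x, g z ∂μ := by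
  unfold weightedCDF
  rw [← setIntegral_Ioc_add_setIntegral_Ioi hg hx] at hp ⊢
  field_simp
  ring

lemma weightedCDF_lt_one (hg : Integrable g μ) (hpos : ∀ x, 0 < ∫ z in Ioi x, g z ∂μ) (x : ℝ) :
    weightedCDF μ g x < 1 := by
  rcases le_total x 0 with hx | hx
  · rw [weightedCDF_of_nonpos hx]; exact one_pos
  · refine sub_pos.1 ?_
    rw [one_sub_weightedCDF hg (hpos 0).ne' hx]
    exact mul_pos (inv_pos.2 (hpos 0)) (hpos x)

lemma tendsto_weightedCDF_atTop (hg : Integrable g μ) (hp : ∫ z in Ioi 0, g z ∂μ ≠ 0) :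
    Tendsto (weightedCDF μ g) atTop (𝓝 1) := by
  have h : Tendsto (fun x => ∫ z in Ioc 0 x, g z ∂μ) atTop (𝓝 (∫ z in Ioi 0, g z ∂μ)) :=
    (intervalIntegral_tendsto_integral_Ioi 0 hg.integrableOn tendsto_id).congr'
      ((eventually_ge_atTop 0).mono fun x hx => intervalIntegral.integral_of_le hx)
  have := h.const_mul (∫ z in Ioi 0, g z ∂μ)⁻¹
  rwa [inv_mul_cancel₀ hp] at this

end WeightedCDF

section TruncationModel

variable {FF GG : ℝ → ℝ} {μF μG : Measure ℝ}

lemma setIntegral_Ioi_one_sub_pos (hF : IsLifetimeCDF μF FF) (hFlt : ∀ x, FF x < 1)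
    (hG : IsLifetimeCDF μG GG) (hGlt : ∀ x, GG x < 1) (x : ℝ) :
    0 < ∫ z in Ioi x, (1 - GG z) ∂μF := by
  have := hF.isProbabilityMeasure
  rw [setIntegral_pos_iff_support_of_nonneg_ae (ae_of_all _ fun z => sub_nonneg.2 (hG.le_one z))
      (hG.integrable_one_sub μF).integrableOn,
    Function.support_eq_univ fun z => sub_ne_zero.2 (hGlt z).ne', univ_inter, hF.measure_Ioi]
  exact ENNReal.ofReal_pos.2 (sub_pos.2 (hFlt x))

lemma setIntegral_Ioi_one_sub_le (hF : IsLifetimeCDF μF FF) (hG : IsLifetimeCDF μG GG) (x : ℝ) :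
    ∫ z in Ioi x, (1 - GG z) ∂μF ≤ (1 - GG x) * (1 - FF x) := by
  have := hF.isProbabilityMeasure
  calc ∫ z in Ioi x, (1 - GG z) ∂μF ≤ ∫ _ in Ioi x, (1 - GG x) ∂μF :=
        setIntegral_mono_on (hG.integrable_one_sub μF).integrableOn
          (integrable_const _).integrableOn measurableSet_Ioi
          fun z hz => sub_le_sub_left (hG.mono (le_of_lt hz)) 1
    _ = (1 - GG x) * (1 - FF x) := by
        rw [setIntegral_const, measureReal_def, hF.measure_Ioi,
          ENNReal.toReal_ofReal (sub_nonneg.2 (hF.le_one x)), smul_eq_mul, mul_comm]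

lemma setIntegral_one_sub_sub_setIntegral_eq_mul (hF : IsLifetimeCDF μF FF)
    (hG : IsLifetimeCDF μG GG) (hGc : Continuous GG) (z : ℝ) :
    ∫ x in Ioc 0 z, (1 - GG x) ∂μF - ∫ y in Ioc 0 z, FF y ∂μG = FF z * (1 - GG z) := by
  have := hF.isProbabilityMeasure
  have := hG.isProbabilityMeasure
  have := hG.nullSingletonClass hGc
  have hFubini : ∫ x in Ioc 0 z, (GG z - GG x) ∂μF = ∫ y in Ioc 0 z, FF y ∂μG := by
    rw [integral_eq_lintegral_of_nonneg_ae ((ae_restrict_iff' measurableSet_Ioc).2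
          (ae_of_all _ fun x hx => sub_nonneg.2 (hG.mono hx.2)))
        (hG.mono.measurable.const_sub _).aestronglyMeasurable,
      integral_eq_lintegral_of_nonneg_ae (ae_of_all _ hF.nonneg)
        hF.mono.measurable.aestronglyMeasurable]
    congr 1
    calc ∫⁻ x in Ioc 0 z, ENNReal.ofReal (GG z - GG x) ∂μF
        = ∫⁻ x in Ioc 0 z, μG (Ioc x z) ∂μF := by simp_rw [hG.measure_Ioc]
      _ = ∫⁻ y in Ioc 0 z, μF (Ioc 0 y) ∂μG := lintegral_measure_Ioc_eq 0 z
      _ = ∫⁻ y in Ioc 0 z, ENNReal.ofReal (FF y) ∂μG := by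
        simp_rw [hF.measure_Ioc, hF.eq_zero_of_nonpos 0 le_rfl, sub_zero]
  have hsplit : ∫ x in Ioc 0 z, (GG z - GG x) ∂μF
      = ∫ x in Ioc 0 z, (1 - GG x) ∂μF - FF z * (1 - GG z) := by
    simp_rw [show ∀ x, GG z - GG x = (1 - GG x) - (1 - GG z) by intro; ring]
    rw [integral_sub (hG.integrable_one_sub μF).integrableOn (integrable_const _),
      setIntegral_const, measureReal_def, hF.measure_Ioc, hF.eq_zero_of_nonpos 0 le_rfl, sub_zero,
      ENNReal.toReal_ofReal (hF.nonneg z), smul_eq_mul]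
  linarith

lemma div_one_sub_le_div_one_sub_weightedCDF (hF : IsLifetimeCDF μF FF) (hFlt : ∀ x, FF x < 1)
    (hG : IsLifetimeCDF μG GG) (hGc : Continuous GG) (hGlt : ∀ x, GG x < 1) {G : ℝ → ℝ}
    (hGdef : ∀ y, G y = (∫ z in Ioi 0, (1 - GG z) ∂μF)⁻¹ * ∫ z in Ioc 0 y, FF z ∂μG)
    {z : ℝ} (hz : 0 ≤ z) :
    FF z / (1 - FF z) ≤ (weightedCDF μF (fun x => 1 - GG x) z - G z)
      / (1 - weightedCDF μF (fun x => 1 - GG x) z) := by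
  have := hF.isProbabilityMeasure
  set p := ∫ x in Ioi 0, (1 - GG x) ∂μF
  have hp : 0 < p := setIntegral_Ioi_one_sub_pos hF hFlt hG hGlt 0
  have hGz : 0 < 1 - GG z := sub_pos.2 (hGlt z)
  have hFz : 0 < 1 - FF z := sub_pos.2 (hFlt z)
  have hsub : weightedCDF μF (fun x => 1 - GG x) z - G z = p⁻¹ * (FF z * (1 - GG z)) := by
    rw [hGdef, weightedCDF, ← mul_sub, setIntegral_one_sub_sub_setIntegral_eq_mul hF hG hGc]
  have htail := one_sub_weightedCDF (hG.integrable_one_sub μF) hp.ne' hz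
  calc FF z / (1 - FF z) = p⁻¹ * (FF z * (1 - GG z)) / (p⁻¹ * ((1 - GG z) * (1 - FF z))) := by
        field_simp
    _ ≤ _ := by
      rw [hsub, htail]
      refine div_le_div_of_nonneg_left
        (mul_nonneg (inv_nonneg.2 hp.le) (mul_nonneg (hF.nonneg z) hGz.le))
        (mul_pos (inv_pos.2 hp) (setIntegral_Ioi_one_sub_pos hF hFlt hG hGlt z)) ?_
      exact mul_le_mul_of_nonneg_left (setIntegral_Ioi_one_sub_le hF hG z) (inv_nonneg.2 hp.le)

lemma tendsto_mul_weightedCDF_sub_atTop (hF : IsLifetimeCDF μF FF) (hFc : Continuous FF)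
    (hFlt : ∀ x, FF x < 1) (hG : IsLifetimeCDF μG GG) (hGc : Continuous GG) (hGlt : ∀ x, GG x < 1)
    {G : ℝ → ℝ}
    (hGdef : ∀ y, G y = (∫ z in Ioi 0, (1 - GG z) ∂μF)⁻¹ * ∫ z in Ioc 0 y, FF z ∂μG) :
    Tendsto (fun t => t * (weightedCDF μF (fun z => 1 - GG z)
      (tailQuantile (weightedCDF μF fun z => 1 - GG z) t)
      - G (tailQuantile (weightedCDF μF fun z => 1 - GG z) t))) atTop atTop := by
  have := hF.isProbabilityMeasure
  have := hF.nullSingletonClass hFc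
  have hg := hG.integrable_one_sub μF
  have hpos := setIntegral_Ioi_one_sub_pos hF hFlt hG hGlt
  set F := weightedCDF μF (fun z => 1 - GG z)
  have hF0 : ∀ x ≤ 0, F x = 0 := fun _ => weightedCDF_of_nonpos
  have hFcont : Continuous F :=
    continuous_weightedCDF (by rw [hF.measure_Iic, hF.eq_zero_of_nonpos 0 le_rfl,
      ENNReal.ofReal_zero]) hg
  have hFtop := tendsto_weightedCDF_atTop hg (hpos 0).ne'
  have hZ := tendsto_tailQuantile_atTop
    (monotone_weightedCDF hg fun z => sub_nonneg.2 (hG.le_one z)) hFcont hF0 hFtop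
    (weightedCDF_lt_one hg hpos)
  refine tendsto_atTop_mono' _ ?_
    ((tendsto_div_one_sub_atTop hF.tendsto_atTop (.of_forall hFlt)).comp hZ)
  filter_upwards [eventually_gt_atTop 1] with t ht
  have hbound := div_one_sub_le_div_one_sub_weightedCDF hF hFlt hG hGc hGlt hGdef
    (tailQuantile_pos hFcont hF0 hFtop ht).le
  have hlevel : 1 - F (tailQuantile F t) = t⁻¹ := by
    rw [apply_tailQuantile hFcont hF0 hFtop ht]; ring
  rwa [hlevel, div_inv_eq_mul, mul_comm] at hbound

end TruncationModel

theorem t_pow_mul_C_tendsto_atTop_general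
    (FF GG : ℝ → ℝ)
    (hFFmono : Monotone FF) (hFFcont : Continuous FF)
    (hFF0 : ∀ x ≤ (0 : ℝ), FF x = 0) (hFFtop : Tendsto FF atTop (nhds 1))
    (hGGmono : Monotone GG) (hGGcont : Continuous GG)
    (hGG0 : ∀ x ≤ (0 : ℝ), GG x = 0) (hGGtop : Tendsto GG atTop (nhds 1))
    (hFFlt : ∀ z : ℝ, FF z < 1) (hGGlt : ∀ z : ℝ, GG z < 1)
    -- observed marginals
    (μF μG : Measure ℝ)
    (hμF : ∀ b, μF (Set.Iic b) = ENNReal.ofReal (FF b))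
    (hμG : ∀ b, μG (Set.Iic b) = ENNReal.ofReal (GG b))
    (p : ℝ) (hp : p = ∫ z in Set.Ioi (0 : ℝ), (1 - GG z) ∂μF)
    (F G : ℝ → ℝ)
    (hF : ∀ x, F x = p⁻¹ * ∫ z in Set.Ioc (0 : ℝ) x, (1 - GG z) ∂μF)
    (hG : ∀ y, G y = p⁻¹ * ∫ z in Set.Ioc (0 : ℝ) y, FF z ∂μG) :
    ∀ ν : ℝ, 0 < ν → ν ≤ 1 →
      Tendsto (fun t => t ^ (1 / ν) * (F (tailQuantile F t) - G (tailQuantile F t)))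
        atTop atTop := by
  intro ν hν hν1
  subst hp
  obtain rfl : F = weightedCDF μF (fun z => 1 - GG z) := funext hF
  have h := tendsto_mul_weightedCDF_sub_atTop ⟨hFFmono, hFF0, hFFtop, hμF⟩ hFFcont hFFlt
    ⟨hGGmono, hGG0, hGGtop, hμG⟩ hGGcont hGGlt hG
  refine tendsto_atTop_mono' _ ?_ h
  filter_upwards [eventually_gt_atTop 1, h.eventually_ge_atTop 0] with t ht hC
  exact mul_le_mul_of_nonneg_right (self_le_rpow_of_one_le ht.le (one_le_one_div hν hν1))
    (nonneg_of_mul_nonneg_right hC (zero_lt_one.trans ht))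

/-- for each 0 < ν ≤ 1, t^{1/ν}·C(U_F(t)) → ∞ as t → ∞, where C := F − G and U_F(t) := F^←(1−1/t). -/
theorem t_pow_mul_C_tendsto_atTop
    (FF GG : ℝ → ℝ) (γ₁ γ₂ : ℝ) (hγ₁ : 0 < γ₁) (hγ₂ : 0 < γ₂)
    (hFFmono : Monotone FF) (hFFcont : Continuous FF)
    (hFF0 : ∀ x ≤ (0 : ℝ), FF x = 0) (hFFtop : Tendsto FF atTop (nhds 1))
    (hGGmono : Monotone GG) (hGGcont : Continuous GG)
    (hGG0 : ∀ x ≤ (0 : ℝ), GG x = 0) (hGGtop : Tendsto GG atTop (nhds 1))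
    (hFFlt : ∀ z : ℝ, FF z < 1) (hGGlt : ∀ z : ℝ, GG z < 1)
    (hRVF : ∀ x > (0 : ℝ),
      Tendsto (fun z => (1 - FF (x * z)) / (1 - FF z)) atTop (nhds (x ^ (-(1 / γ₁)))))
    (hRVG : ∀ x > (0 : ℝ),
      Tendsto (fun z => (1 - GG (x * z)) / (1 - GG z)) atTop (nhds (x ^ (-(1 / γ₂)))))
    -- second-order condition for 𝐅
    (τ₁ : ℝ) (hτ₁ : τ₁ < 0) (AF : ℝ → ℝ) (hAF0 : Tendsto AF atTop (nhds 0))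
    (hAFsign : (∀ᶠ t in atTop, 0 < AF t) ∨ (∀ᶠ t in atTop, AF t < 0))
    (hAFrv : ∀ x > (0 : ℝ), Tendsto (fun t => |AF (x * t)| / |AF t|) atTop (nhds (x ^ τ₁)))
    (hSOF : ∀ x > (0 : ℝ),
      Tendsto (fun t => (tailQuantile FF (t * x) / tailQuantile FF t - x ^ γ₁) / AF t)
        atTop (nhds (x ^ γ₁ * ((x ^ τ₁ - 1) / τ₁))))
    -- second-order condition for 𝐆
    (τ₂ : ℝ) (hτ₂ : τ₂ < 0) (AG : ℝ → ℝ) (hAG0 : Tendsto AG atTop (nhds 0))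
    (hAGsign : (∀ᶠ t in atTop, 0 < AG t) ∨ (∀ᶠ t in atTop, AG t < 0))
    (hAGrv : ∀ x > (0 : ℝ), Tendsto (fun t => |AG (x * t)| / |AG t|) atTop (nhds (x ^ τ₂)))
    (hSOG : ∀ x > (0 : ℝ),
      Tendsto (fun t => (tailQuantile GG (t * x) / tailQuantile GG t - x ^ γ₂) / AG t)
        atTop (nhds (x ^ γ₂ * ((x ^ τ₂ - 1) / τ₂))))
    -- observed marginals
    (μF μG : Measure ℝ)
    (hμF : ∀ b, μF (Set.Iic b) = ENNReal.ofReal (FF b))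
    (hμG : ∀ b, μG (Set.Iic b) = ENNReal.ofReal (GG b))
    (p : ℝ) (hp : p = ∫ z in Set.Ioi (0 : ℝ), (1 - GG z) ∂μF) (hppos : 0 < p)
    (F G : ℝ → ℝ)
    (hF : ∀ x, F x = p⁻¹ * ∫ z in Set.Ioc (0 : ℝ) x, (1 - GG z) ∂μF)
    (hG : ∀ y, G y = p⁻¹ * ∫ z in Set.Ioc (0 : ℝ) y, FF z ∂μG)
    (γ : ℝ) (hγ : γ = γ₁ * γ₂ / (γ₁ + γ₂)) :
    ∀ ν : ℝ, 0 < ν → ν ≤ 1 →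
      Tendsto (fun t => t ^ (1 / ν) * (F (tailQuantile F t) - G (tailQuantile F t)))
        atTop atTop :=
  t_pow_mul_C_tendsto_atTop_general FF GG hFFmono hFFcont hFF0 hFFtop hGGmono hGGcont hGG0 hGGtop
    hFFlt hGGlt μF μG hμF hμG p hp F G hF hG
end

section
/- Let γ₁, γ₂ > 0, γ := γ₁γ₂/(γ₁+γ₂), and let W : [0,1] → ℝ be a continuous function with W(0) = 0 and |W(s)| ≤ K·s^η for all s ∈ [0,1], for some constant K and some η ∈ (γ/γ₂, 1]. Define Γ(x;W) := (γ/γ₁)x^{−1/γ₁}{x^{1/γ}W(x^{−1/γ}) − W(1)} + (γ/(γ₁+γ₂))x^{−1/γ₁}∫₀¹ s^{−γ/γ₂−1}{x^{1/γ}W(x^{−1/γ}s) − W(s)} ds for x ≥ 1. Then ∫₁^∞ x^{−1}·Γ(x;W) dx = −γ·W(1) + (γ/(γ₁+γ₂))·∫₀¹ (γ₂ − γ₁ − γ·log s)·s^{−γ/γ₂−1}·W(s) ds, all integrals being absolutely convergent. -/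
open MeasureTheory Set Real

/-!
Put `g u = u ^ (-γ/γ₂ - 1) * W u` and `G t = ∫₀ᵗ g`. The growth bound makes `g` and `log · g`
integrable on `(0, 1]`, since `η > γ/γ₂`. Substituting `x = t ^ (-γ)` turns `dx / x` into
`γ dt / t` on `(0, 1]`, and rescaling `s ↦ t s` in the inner integral gives
`t⁻¹ Γ(t^{-γ}) = (γ/γ₁) g t + (γ/(γ₁+γ₂)) t⁻¹ G t - C t^{γ/γ₁ - 1}`, because
`γ/γ₁ + γ/γ₂ = 1`. Finally Fubini on the triangle `u ≤ t` gives
`∫₀¹ t⁻¹ G t dt = -∫₀¹ log u g u du`, and the rest is bookkeeping of constants.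
-/

theorem integrableOn_Ioc_rpow {p : ℝ} (hp : -1 < p) :
    IntegrableOn (fun u : ℝ => u ^ p) (Ioc 0 1) :=
  (intervalIntegrable_iff_integrableOn_Ioc_of_le zero_le_one).mp
    (intervalIntegral.intervalIntegrable_rpow' hp)

theorem integral_Ioc_rpow_sub_one {a : ℝ} (ha : 0 < a) :
    ∫ t in Ioc (0 : ℝ) 1, t ^ (a - 1) = a⁻¹ := by
  rw [← intervalIntegral.integral_of_le zero_le_one, integral_rpow (Or.inl (by linarith)),
    sub_add_cancel, one_rpow, zero_rpow ha.ne', sub_zero, one_div]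

section PowerBound

variable {f : ℝ → ℝ} {K p : ℝ}

theorem integrableOn_Ioc_of_abs_le_rpow (hp : -1 < p)
    (hf : AEStronglyMeasurable f (volume.restrict (Ioc 0 1)))
    (hbd : ∀ u ∈ Ioc (0 : ℝ) 1, |f u| ≤ K * u ^ p) :
    IntegrableOn f (Ioc 0 1) :=
  ((integrableOn_Ioc_rpow hp).const_mul K).mono' hf <| by
    filter_upwards [self_mem_ae_restrict measurableSet_Ioc] with u hu
    exact hbd u hu

theorem integrableOn_log_mul_Ioc_of_abs_le_rpow (hp : -1 < p)
    (hf : AEStronglyMeasurable f (volume.restrict (Ioc 0 1)))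
    (hbd : ∀ u ∈ Ioc (0 : ℝ) 1, |f u| ≤ K * u ^ p) :
    IntegrableOn (fun u => log u * f u) (Ioc 0 1) := by
  set ε := (p + 1) / 2 with hε_def
  have hε : 0 < ε := by rw [hε_def]; linarith
  -- `|log u| * u ^ ε < 1 / ε` on `(0, 1]` trades the logarithm for a little of the exponent
  refine integrableOn_Ioc_of_abs_le_rpow (K := K / ε) (p := p - ε) (by rw [hε_def]; linarith)
    (measurable_log.aestronglyMeasurable.mul hf) fun u hu => ?_
  have hu0 : 0 < u := hu.1
  have hK : 0 ≤ K * u ^ (p - ε) := by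
    rw [rpow_sub hu0, ← mul_div_assoc]
    exact div_nonneg ((abs_nonneg _).trans (hbd u hu)) (rpow_nonneg hu0.le _)
  have hlog : |log u| * u ^ ε ≤ 1 / ε := by
    simpa [abs_mul, abs_of_pos (rpow_pos_of_pos hu0 ε)] using
      (abs_log_mul_self_rpow_lt u ε hu0 hu.2 hε).le
  calc |log u * f u| = |log u| * |f u| := abs_mul _ _
    _ ≤ |log u| * (K * u ^ p) := mul_le_mul_of_nonneg_left (hbd u hu) (abs_nonneg _)
    _ = (|log u| * u ^ ε) * (K * u ^ (p - ε)) := by rw [rpow_sub hu0]; field_simp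
    _ ≤ 1 / ε * (K * u ^ (p - ε)) := mul_le_mul_of_nonneg_right hlog hK
    _ = K / ε * u ^ (p - ε) := by ring

end PowerBound

section Scaling

theorem integrableOn_Ioc_comp_mul_left {g : ℝ → ℝ} (hg : IntegrableOn g (Ioc 0 1)) {t : ℝ}
    (ht : t ∈ Ioc (0 : ℝ) 1) : IntegrableOn (fun s => g (t * s)) (Ioc 0 1) := by
  have h : IntervalIntegrable g volume 0 t :=
    (intervalIntegrable_iff_integrableOn_Ioc_of_le ht.1.le).mpr
      (hg.mono_set (Ioc_subset_Ioc_right ht.2))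
  simpa [ht.1.ne', intervalIntegrable_iff_integrableOn_Ioc_of_le] using h.comp_mul_left (c := t)

theorem setIntegral_Ioc_comp_mul_left (g : ℝ → ℝ) {t : ℝ} (ht : 0 < t) :
    ∫ s in Ioc (0 : ℝ) 1, g (t * s) = t⁻¹ * ∫ u in Ioc 0 t, g u := by
  simpa [intervalIntegral.integral_of_le, ht.le] using
    intervalIntegral.integral_comp_mul_left (a := 0) (b := 1) g ht.ne'

variable {W : ℝ → ℝ} {q t : ℝ}

theorem eqOn_rpow_mul_scaled_sub (ht : 0 < t) (c : ℝ) :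
    EqOn (fun s => s ^ q * (c * W (t * s) - W s))
      (fun s => c * t ^ (-q) * ((t * s) ^ q * W (t * s)) - s ^ q * W s) (Ioc 0 1) :=
  fun s hs => by
    dsimp only
    rw [mul_rpow ht.le hs.1.le, rpow_neg ht.le, ← mul_assoc, mul_assoc c,
      inv_mul_cancel_left₀ (rpow_pos_of_pos ht q).ne']
    ring

theorem integrableOn_rpow_mul_scaled_sub (hg : IntegrableOn (fun u => u ^ q * W u) (Ioc 0 1))
    (ht : t ∈ Ioc (0 : ℝ) 1) (c : ℝ) :
    IntegrableOn (fun s => s ^ q * (c * W (t * s) - W s)) (Ioc 0 1) :=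
  IntegrableOn.congr_fun (((integrableOn_Ioc_comp_mul_left hg ht).const_mul _).sub hg)
    (eqOn_rpow_mul_scaled_sub ht.1 c).symm measurableSet_Ioc

theorem integral_rpow_mul_scaled_sub (hg : IntegrableOn (fun u => u ^ q * W u) (Ioc 0 1))
    (ht : t ∈ Ioc (0 : ℝ) 1) (c : ℝ) :
    ∫ s in Ioc (0 : ℝ) 1, s ^ q * (c * W (t * s) - W s) =
      c * t ^ (-q - 1) * (∫ u in Ioc 0 t, u ^ q * W u) - ∫ u in Ioc 0 1, u ^ q * W u := by
  rw [setIntegral_congr_fun measurableSet_Ioc (eqOn_rpow_mul_scaled_sub ht.1 c),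
    integral_sub ((integrableOn_Ioc_comp_mul_left hg ht).const_mul _) hg, integral_const_mul,
    setIntegral_Ioc_comp_mul_left (fun u => u ^ q * W u) ht.1, rpow_sub ht.1, rpow_one]
  ring

end Scaling

section PowerSubstitution

variable {c : ℝ}

theorem image_rpow_neg_Ioo (hc : 0 < c) : (fun t : ℝ => t ^ (-c)) '' Ioo 0 1 = Ioi 1 := by
  ext x
  constructor
  · rintro ⟨t, ⟨ht0, ht1⟩, rfl⟩
    exact one_lt_rpow_of_pos_of_lt_one_of_neg ht0 ht1 (neg_neg_of_pos hc)
  · intro hx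
    have hx0 : (0 : ℝ) < x := one_pos.trans hx
    refine ⟨x ^ (-c⁻¹), ⟨rpow_pos_of_pos hx0 _, ?_⟩, ?_⟩
    · exact rpow_lt_one_of_one_lt_of_neg hx (neg_neg_of_pos (inv_pos.mpr hc))
    · dsimp only
      rw [← rpow_mul hx0.le, neg_mul_neg, inv_mul_cancel₀ hc.ne', rpow_one]

theorem injOn_rpow_neg_Ioo (hc : 0 < c) : InjOn (fun t : ℝ => t ^ (-c)) (Ioo 0 1) :=
  (strictAntiOn_rpow_Ioi_of_exponent_neg (neg_neg_of_pos hc)).injOn.mono Ioo_subset_Ioi_self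

theorem eqOn_abs_deriv_rpow_neg_smul (hc : 0 < c) (f : ℝ → ℝ) :
    EqOn (fun t => |-c * t ^ (-c - 1)| • ((t ^ (-c))⁻¹ * f (t ^ (-c))))
      (fun t => c * (t⁻¹ * f (t ^ (-c)))) (Ioo 0 1) := fun t ht => by
  have ht0 : 0 < t := ht.1
  simp only [smul_eq_mul]
  rw [abs_mul, abs_neg, abs_of_pos hc, abs_of_pos (rpow_pos_of_pos ht0 _), ← rpow_neg ht0.le,
    neg_neg, mul_assoc, ← mul_assoc (t ^ _), ← rpow_add ht0, show -c - 1 + c = -1 by ring,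
    rpow_neg_one]

theorem setIntegral_Ioi_one_inv_mul (hc : 0 < c) (f : ℝ → ℝ) :
    ∫ x in Ioi 1, x⁻¹ * f x = c * ∫ t in Ioc 0 1, t⁻¹ * f (t ^ (-c)) := by
  rw [← image_rpow_neg_Ioo hc, integral_image_eq_integral_abs_deriv_smul measurableSet_Ioo
    (fun t ht => (hasDerivAt_rpow_const (Or.inl ht.1.ne')).hasDerivWithinAt)
    (injOn_rpow_neg_Ioo hc), setIntegral_congr_fun measurableSet_Ioo
    (eqOn_abs_deriv_rpow_neg_smul hc f), integral_const_mul, integral_Ioc_eq_integral_Ioo]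

theorem integrableOn_Ioi_one_inv_mul_iff (hc : 0 < c) (f : ℝ → ℝ) :
    IntegrableOn (fun x => x⁻¹ * f x) (Ioi 1) ↔
      IntegrableOn (fun t => t⁻¹ * f (t ^ (-c))) (Ioc 0 1) := by
  rw [← image_rpow_neg_Ioo hc, integrableOn_image_iff_integrableOn_abs_deriv_smul
    measurableSet_Ioo (fun t ht => (hasDerivAt_rpow_const (Or.inl ht.1.ne')).hasDerivWithinAt)
    (injOn_rpow_neg_Ioo hc), integrableOn_congr_fun (eqOn_abs_deriv_rpow_neg_smul hc f)
    measurableSet_Ioo, integrableOn_Ioc_iff_integrableOn_Ioo, IntegrableOn, IntegrableOn,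
    integrable_const_mul_iff (isUnit_iff_ne_zero.mpr hc.ne')]

end PowerSubstitution

section Fubini

theorem Ici_inter_Ioc_zero {u : ℝ} (hu : 0 < u) (b : ℝ) : Ici u ∩ Ioc 0 b = Icc u b :=
  Set.ext fun _ => ⟨fun ⟨hl, _, hr⟩ => ⟨hl, hr⟩, fun ⟨hl, hr⟩ => ⟨hl, hu.trans_le hl, hr⟩⟩

theorem integrableOn_Ioc_indicator_Ici_inv {u : ℝ} (hu : 0 < u) :
    IntegrableOn ((Ici u).indicator fun t => t⁻¹) (Ioc 0 1) := by
  rw [IntegrableOn, integrable_indicator_iff measurableSet_Ici, IntegrableOn,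
    Measure.restrict_restrict measurableSet_Ici, Ici_inter_Ioc_zero hu]
  exact (continuousOn_inv₀.mono fun t ht => (hu.trans_le ht.1).ne').integrableOn_Icc

theorem integral_Ioc_indicator_Ici_inv {u : ℝ} (hu : u ∈ Ioc (0 : ℝ) 1) :
    ∫ t in Ioc (0 : ℝ) 1, (Ici u).indicator (fun t => t⁻¹) t = -log u := by
  rw [integral_indicator measurableSet_Ici, Measure.restrict_restrict measurableSet_Ici,
    Ici_inter_Ioc_zero hu.1, integral_Icc_eq_integral_Ioc, ← intervalIntegral.integral_of_le hu.2,
    integral_inv_of_pos hu.1 one_pos, one_div, log_inv]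

noncomputable def triangleKernel (g : ℝ → ℝ) : ℝ × ℝ → ℝ :=
  {p | p.2 ≤ p.1}.indicator fun p => p.1⁻¹ * g p.2

variable {g : ℝ → ℝ}

theorem triangleKernel_apply (t u : ℝ) :
    triangleKernel g (t, u) = (Ici u).indicator (fun t => t⁻¹) t * g u := by
  by_cases h : u ≤ t <;> simp [triangleKernel, indicator, h]

theorem triangleKernel_apply' (t u : ℝ) :
    triangleKernel g (t, u) = t⁻¹ * (Iic t).indicator g u := by
  by_cases h : u ≤ t <;> simp [triangleKernel, indicator, h]

theorem integrable_triangleKernel (hg : IntegrableOn g (Ioc 0 1))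
    (hlog : IntegrableOn (fun u => log u * g u) (Ioc 0 1)) :
    Integrable (triangleKernel g)
      ((volume.restrict (Ioc 0 1)).prod (volume.restrict (Ioc 0 1))) := by
  have hmeas : AEStronglyMeasurable (triangleKernel g)
      ((volume.restrict (Ioc 0 1)).prod (volume.restrict (Ioc 0 1))) :=
    (measurable_fst.inv.aestronglyMeasurable.mul
      (hg.aestronglyMeasurable.comp_quasiMeasurePreserving Measure.quasiMeasurePreserving_snd)
      ).indicator (measurableSet_le measurable_snd measurable_fst)
  refine (integrable_prod_iff' hmeas).mpr ⟨?_, ?_⟩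
  · filter_upwards [self_mem_ae_restrict measurableSet_Ioc] with u hu
    simp only [triangleKernel_apply]
    exact (integrableOn_Ioc_indicator_Ici_inv hu.1).mul_const _
  · refine IntegrableOn.congr_fun hlog.norm (fun u hu => ?_) measurableSet_Ioc
    have hnonneg : ∀ t, 0 ≤ (Ici u).indicator (fun t => t⁻¹) t :=
      indicator_nonneg fun t ht => inv_nonneg.mpr (hu.1.le.trans ht)
    simp only [triangleKernel_apply, norm_mul, Real.norm_eq_abs, abs_of_nonneg (hnonneg _)]
    rw [integral_mul_const, integral_Ioc_indicator_Ici_inv hu,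
      abs_of_nonpos (log_nonpos hu.1.le hu.2)]

theorem setIntegral_triangleKernel_snd {t : ℝ} (ht : t ≤ 1) :
    ∫ u in Ioc (0 : ℝ) 1, triangleKernel g (t, u) = t⁻¹ * ∫ u in Ioc 0 t, g u := by
  simp only [triangleKernel_apply']
  rw [integral_const_mul, integral_indicator measurableSet_Iic,
    Measure.restrict_restrict measurableSet_Iic, Iic_inter_Ioc_of_le ht]

theorem setIntegral_triangleKernel_fst {u : ℝ} (hu : u ∈ Ioc (0 : ℝ) 1) :
    ∫ t in Ioc (0 : ℝ) 1, triangleKernel g (t, u) = -(log u * g u) := by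
  simp only [triangleKernel_apply]
  rw [integral_mul_const, integral_Ioc_indicator_Ici_inv hu, neg_mul]

theorem integrableOn_inv_mul_integral_Ioc (hg : IntegrableOn g (Ioc 0 1))
    (hlog : IntegrableOn (fun u => log u * g u) (Ioc 0 1)) :
    IntegrableOn (fun t => t⁻¹ * ∫ u in Ioc 0 t, g u) (Ioc 0 1) :=
  (integrable_triangleKernel hg hlog).integral_prod_left.congr <| by
    filter_upwards [self_mem_ae_restrict measurableSet_Ioc] with t ht
    exact setIntegral_triangleKernel_snd ht.2

theorem integral_inv_mul_integral_Ioc (hg : IntegrableOn g (Ioc 0 1))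
    (hlog : IntegrableOn (fun u => log u * g u) (Ioc 0 1)) :
    ∫ t in Ioc (0 : ℝ) 1, t⁻¹ * ∫ u in Ioc 0 t, g u = -∫ u in Ioc (0 : ℝ) 1, log u * g u := by
  calc ∫ t in Ioc (0 : ℝ) 1, t⁻¹ * ∫ u in Ioc 0 t, g u
      = ∫ t in Ioc (0 : ℝ) 1, ∫ u in Ioc (0 : ℝ) 1, triangleKernel g (t, u) :=
        setIntegral_congr_fun measurableSet_Ioc fun t ht =>
          (setIntegral_triangleKernel_snd ht.2).symm
    _ = ∫ u in Ioc (0 : ℝ) 1, ∫ t in Ioc (0 : ℝ) 1, triangleKernel g (t, u) :=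
        integral_integral_swap (integrable_triangleKernel hg hlog)
    _ = ∫ u in Ioc (0 : ℝ) 1, -(log u * g u) :=
        setIntegral_congr_fun measurableSet_Ioc fun u hu => setIntegral_triangleKernel_fst hu
    _ = -∫ u in Ioc (0 : ℝ) 1, log u * g u := integral_neg _

end Fubini

section GammaProcess

variable {W : ℝ → ℝ}

theorem aestronglyMeasurable_rpow_mul (hW : ContinuousOn W (Icc 0 1)) (q : ℝ) :
    AEStronglyMeasurable (fun u => u ^ q * W u) (volume.restrict (Ioc 0 1)) :=
  ((continuousOn_id.rpow_const fun _ hu => Or.inl hu.1.ne').mul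
    (hW.mono Ioc_subset_Icc_self)).aestronglyMeasurable measurableSet_Ioc

theorem abs_rpow_mul_le {K η : ℝ} (hW : ∀ s ∈ Icc (0 : ℝ) 1, |W s| ≤ K * s ^ η) (q : ℝ) :
    ∀ u ∈ Ioc (0 : ℝ) 1, |u ^ q * W u| ≤ K * u ^ (q + η) := fun u hu => by
  rw [abs_mul, abs_of_pos (rpow_pos_of_pos hu.1 _), rpow_add hu.1, mul_left_comm]
  exact mul_le_mul_of_nonneg_left (hW u (Ioc_subset_Icc_self hu)) (rpow_pos_of_pos hu.1 _).le

/-- The paper's `Γ(x; W)`. -/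
noncomputable def gammaFun (γ₁ γ₂ γ : ℝ) (W : ℝ → ℝ) (x : ℝ) : ℝ :=
  (γ / γ₁) * x ^ (-(1 / γ₁)) * (x ^ (1 / γ) * W (x ^ (-(1 / γ))) - W 1) +
    (γ / (γ₁ + γ₂)) * x ^ (-(1 / γ₁)) *
      ∫ s in Ioc (0 : ℝ) 1, s ^ (-(γ / γ₂) - 1) * (x ^ (1 / γ) * W (x ^ (-(1 / γ)) * s) - W s)

theorem inv_mul_gammaFun_rpow_neg {γ₁ γ₂ γ : ℝ} (hγ : γ ≠ 0) (hsum : γ / γ₁ + γ / γ₂ = 1)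
    (hg : IntegrableOn (fun u => u ^ (-(γ / γ₂) - 1) * W u) (Ioc 0 1))
    {t : ℝ} (ht : t ∈ Ioc (0 : ℝ) 1) :
    t⁻¹ * gammaFun γ₁ γ₂ γ W (t ^ (-γ)) =
      γ / γ₁ * (t ^ (-(γ / γ₂) - 1) * W t) +
        γ / (γ₁ + γ₂) * (t⁻¹ * ∫ u in Ioc 0 t, u ^ (-(γ / γ₂) - 1) * W u) -
        (γ / γ₁ * W 1 + γ / (γ₁ + γ₂) * ∫ u in Ioc 0 1, u ^ (-(γ / γ₂) - 1) * W u) *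
          t ^ (γ / γ₁ - 1) := by
  have ht0 : 0 < t := ht.1
  have hpow : ∀ p, (t ^ (-γ)) ^ p = t ^ (-γ * p) := fun p => (rpow_mul ht0.le _ _).symm
  have hinv : (t ^ (-γ)) ^ (1 / γ) = t⁻¹ := by
    rw [hpow, show -γ * (1 / γ) = -1 by field_simp, rpow_neg_one]
  have hself : (t ^ (-γ)) ^ (-(1 / γ)) = t := by
    rw [hpow, show -γ * -(1 / γ) = 1 by field_simp, rpow_one]
  have hγ₁pow : (t ^ (-γ)) ^ (-(1 / γ₁)) = t ^ (γ / γ₁) := by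
    rw [hpow]; congr 1; ring
  have hγ₂pow : t ^ (-(-(γ / γ₂) - 1) - 1) = t ^ (γ / γ₂) := by congr 1; ring
  have hmul : t ^ (γ / γ₁) * t ^ (γ / γ₂) = t := by rw [← rpow_add ht0, hsum, rpow_one]
  have hg_exp : t ^ (-(γ / γ₂) - 1) = t ^ (γ / γ₁) * t⁻¹ * t⁻¹ := by
    rw [← rpow_neg_one, ← rpow_add ht0, ← rpow_add ht0]; congr 1; linarith
  have hpow_sub_one : t ^ (γ / γ₁ - 1) = t ^ (γ / γ₁) * t⁻¹ := by
    rw [← rpow_neg_one, ← rpow_add ht0]; ring_nf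
  have hinv_mul : t⁻¹ * t = 1 := inv_mul_cancel₀ ht0.ne'
  rw [gammaFun, hinv, hself, hγ₁pow, integral_rpow_mul_scaled_sub hg ht, hγ₂pow, hg_exp,
    hpow_sub_one]
  linear_combination
    (γ / (γ₁ + γ₂) * t⁻¹ * ∫ u in Ioc 0 t, u ^ (-(γ / γ₂) - 1) * W u) * (t⁻¹ * hmul + hinv_mul)

theorem eqOn_inv_mul_comp_rpow_neg {γ₁ γ₂ γ : ℝ} (hγ : 0 < γ) (hsum : γ / γ₁ + γ / γ₂ = 1)
    (hg : IntegrableOn (fun u => u ^ (-(γ / γ₂) - 1) * W u) (Ioc 0 1))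
    {Γ : ℝ → ℝ} (hΓ : ∀ x ≥ (1 : ℝ), Γ x = gammaFun γ₁ γ₂ γ W x) :
    EqOn (fun t => t⁻¹ * Γ (t ^ (-γ)))
      (fun t => γ / γ₁ * (t ^ (-(γ / γ₂) - 1) * W t) +
        γ / (γ₁ + γ₂) * (t⁻¹ * ∫ u in Ioc 0 t, u ^ (-(γ / γ₂) - 1) * W u) -
        (γ / γ₁ * W 1 + γ / (γ₁ + γ₂) * ∫ u in Ioc 0 1, u ^ (-(γ / γ₂) - 1) * W u) *
          t ^ (γ / γ₁ - 1)) (Ioc 0 1) := fun t ht => by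
  dsimp only
  rw [hΓ _ (one_le_rpow_of_pos_of_le_one_of_nonpos ht.1 ht.2 (neg_nonpos.mpr hγ.le))]
  exact inv_mul_gammaFun_rpow_neg hγ.ne' hsum hg ht

end GammaProcess

theorem integral_of_Gamma_process_general
    (γ₁ γ₂ : ℝ) (hγ₁ : 0 < γ₁) (hγ₂ : 0 < γ₂)
    (γ : ℝ) (hγ : γ = γ₁ * γ₂ / (γ₁ + γ₂))
    (W : ℝ → ℝ) (hWcont : ContinuousOn W (Set.Icc 0 1))
    (K η : ℝ) (hη₁ : γ / γ₂ < η)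
    (hWbd : ∀ s ∈ Set.Icc (0 : ℝ) 1, |W s| ≤ K * s ^ η)
    (Γ : ℝ → ℝ)
    (hΓ : ∀ x ≥ (1 : ℝ), Γ x =
      (γ / γ₁) * x ^ (-(1 / γ₁)) * (x ^ (1 / γ) * W (x ^ (-(1 / γ))) - W 1) +
      (γ / (γ₁ + γ₂)) * x ^ (-(1 / γ₁)) *
        ∫ s in Set.Ioc (0 : ℝ) 1,
          s ^ (-(γ / γ₂) - 1) * (x ^ (1 / γ) * W (x ^ (-(1 / γ)) * s) - W s)) :
    (∀ x ≥ (1 : ℝ), IntegrableOn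
        (fun s => s ^ (-(γ / γ₂) - 1) * (x ^ (1 / γ) * W (x ^ (-(1 / γ)) * s) - W s))
        (Set.Ioc 0 1)) ∧
    IntegrableOn (fun x => x⁻¹ * Γ x) (Set.Ioi 1) ∧
    IntegrableOn (fun s => (γ₂ - γ₁ - γ * Real.log s) * s ^ (-(γ / γ₂) - 1) * W s)
      (Set.Ioc 0 1) ∧
    (∫ x in Set.Ioi (1 : ℝ), x⁻¹ * Γ x) =
      -γ * W 1 + (γ / (γ₁ + γ₂)) *
        ∫ s in Set.Ioc (0 : ℝ) 1,
          (γ₂ - γ₁ - γ * Real.log s) * s ^ (-(γ / γ₂) - 1) * W s := by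
  have hγ0 : 0 < γ := hγ ▸ by positivity
  have hsum : γ / γ₁ + γ / γ₂ = 1 := by rw [hγ]; field_simp; ring
  set g : ℝ → ℝ := fun u => u ^ (-(γ / γ₂) - 1) * W u with hg_def
  have hg : IntegrableOn g (Ioc 0 1) := integrableOn_Ioc_of_abs_le_rpow (by linarith)
    (aestronglyMeasurable_rpow_mul hWcont _) (abs_rpow_mul_le hWbd _)
  have hlog : IntegrableOn (fun u => log u * g u) (Ioc 0 1) :=
    integrableOn_log_mul_Ioc_of_abs_le_rpow (by linarith)
      (aestronglyMeasurable_rpow_mul hWcont _) (abs_rpow_mul_le hWbd _)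
  have hdecomp := eqOn_inv_mul_comp_rpow_neg hγ0 hsum hg hΓ
  have hG := integrableOn_inv_mul_integral_Ioc hg hlog
  have hint₁₂ := (hg.const_mul (γ / γ₁)).fun_add (hG.const_mul (γ / (γ₁ + γ₂)))
  have hint₃ := (integrableOn_Ioc_rpow (p := γ / γ₁ - 1) (by linarith [div_pos hγ0 hγ₁])).const_mul
    (γ / γ₁ * W 1 + γ / (γ₁ + γ₂) * ∫ u in Ioc 0 1, g u)
  have hlim : EqOn (fun s => (γ₂ - γ₁ - γ * log s) * s ^ (-(γ / γ₂) - 1) * W s)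
      (fun s => (γ₂ - γ₁) * g s - γ * (log s * g s)) (Ioc 0 1) := fun s _ => by
    simp only [hg_def]; ring
  refine ⟨fun x hx => integrableOn_rpow_mul_scaled_sub hg ⟨rpow_pos_of_pos (by linarith) _,
      rpow_le_one_of_one_le_of_nonpos hx (by simp [hγ0.le])⟩ _,
    (integrableOn_Ioi_one_inv_mul_iff hγ0 Γ).mpr
      (IntegrableOn.congr_fun (hint₁₂.sub hint₃) hdecomp.symm measurableSet_Ioc),
    IntegrableOn.congr_fun ((hg.const_mul _).sub (hlog.const_mul _)) hlim.symm measurableSet_Ioc,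
    ?_⟩
  rw [setIntegral_Ioi_one_inv_mul hγ0, setIntegral_congr_fun measurableSet_Ioc hdecomp,
    setIntegral_congr_fun measurableSet_Ioc hlim, integral_sub hint₁₂ hint₃,
    integral_add (hg.const_mul _) (hG.const_mul _),
    integral_sub (hg.const_mul _) (hlog.const_mul _)]
  simp only [integral_const_mul]
  rw [integral_inv_mul_integral_Ioc hg hlog, integral_Ioc_rpow_sub_one (div_pos hγ0 hγ₁), hγ]
  field_simp
  ring

/-- integral identity `∫₁^∞ x⁻¹ Γ(x;W) dx = −γW(1) +
(γ/(γ₁+γ₂)) ∫₀¹ (γ₂−γ₁−γ log s) s^{−γ/γ₂−1} W(s) ds`, all integrals being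
absolutely convergent, for any continuous `W : [0,1] → ℝ` with `W(0)=0` and
`|W(s)| ≤ K s^η` for some `η ∈ (γ/γ₂, 1]`. -/
theorem integral_of_Gamma_process
    (γ₁ γ₂ : ℝ) (hγ₁ : 0 < γ₁) (hγ₂ : 0 < γ₂)
    (γ : ℝ) (hγ : γ = γ₁ * γ₂ / (γ₁ + γ₂))
    (W : ℝ → ℝ) (hWcont : ContinuousOn W (Set.Icc 0 1)) (hW0 : W 0 = 0)
    (K η : ℝ) (hη₁ : γ / γ₂ < η) (hη₂ : η ≤ 1)
    (hWbd : ∀ s ∈ Set.Icc (0 : ℝ) 1, |W s| ≤ K * s ^ η)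
    (Γ : ℝ → ℝ)
    (hΓ : ∀ x ≥ (1 : ℝ), Γ x =
      (γ / γ₁) * x ^ (-(1 / γ₁)) * (x ^ (1 / γ) * W (x ^ (-(1 / γ))) - W 1) +
      (γ / (γ₁ + γ₂)) * x ^ (-(1 / γ₁)) *
        ∫ s in Set.Ioc (0 : ℝ) 1,
          s ^ (-(γ / γ₂) - 1) * (x ^ (1 / γ) * W (x ^ (-(1 / γ)) * s) - W s)) :
    (∀ x ≥ (1 : ℝ), IntegrableOn
        (fun s => s ^ (-(γ / γ₂) - 1) * (x ^ (1 / γ) * W (x ^ (-(1 / γ)) * s) - W s))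
        (Set.Ioc 0 1)) ∧
    IntegrableOn (fun x => x⁻¹ * Γ x) (Set.Ioi 1) ∧
    IntegrableOn (fun s => (γ₂ - γ₁ - γ * Real.log s) * s ^ (-(γ / γ₂) - 1) * W s)
      (Set.Ioc 0 1) ∧
    (∫ x in Set.Ioi (1 : ℝ), x⁻¹ * Γ x) =
      -γ * W 1 + (γ / (γ₁ + γ₂)) *
        ∫ s in Set.Ioc (0 : ℝ) 1,
          (γ₂ - γ₁ - γ * Real.log s) * s ^ (-(γ / γ₂) - 1) * W s :=
  integral_of_Gamma_process_general γ₁ γ₂ hγ₁ hγ₂ γ hγ W hWcont K η hη₁ hWbd Γ hΓ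
end

section
/- Let (W(s))_{s∈[0,1]} be a real stochastic process on a probability space with continuous paths, E[W(s)] = 0 and E[W(s)W(t)] = min(s,t) for all s,t ∈ [0,1]. For ρ ∈ (1/2, 1), the random variable Δ₁ := ∫₀¹ s^{ρ−2} W(s) ds is a.s. defined by an absolutely convergent integral, is square-integrable, and E[Δ₁²] = 2/(ρ(2ρ−1)). -/
/-!
Extending `W` past `[0, 1]` by `projIcc` makes `X s ω = s ^ (ρ - 2) * W s ω` jointly measurable.
By Cauchy–Schwarz, `E|X s| ≤ ‖X s‖₂ = s ^ (ρ - 3/2)` and `E|X s * X t| ≤ ‖X s‖₂ ‖X t‖₂`, and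
`s ^ (ρ - 3/2)` is integrable on `(0, 1]` exactly because `ρ > 1/2`. So Fubini applies to `X` and
to `(s, t, ω) ↦ X s ω * X t ω`: `Δ₁` is a.s. an absolutely convergent integral, `Δ₁ ^ 2` is
integrable, and `E[Δ₁ ^ 2] = ∫∫ s ^ (ρ - 2) t ^ (ρ - 2) min s t ds dt`, an elementary integral.
-/

open MeasureTheory Filter Set Real Function

theorem integral_abs_mul_le_sqrt_mul_sqrt {Ω : Type*} [MeasurableSpace Ω] {P : Measure Ω}
    {f g : Ω → ℝ} (hf : MemLp f 2 P) (hg : MemLp g 2 P) :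
    ∫ ω, |f ω * g ω| ∂P ≤ √(∫ ω, f ω ^ 2 ∂P) * √(∫ ω, g ω ^ 2 ∂P) := by
  have h := integral_mul_le_Lp_mul_Lq_of_nonneg Real.HolderConjugate.two_two
    (ae_of_all _ fun ω => abs_nonneg (f ω)) (ae_of_all _ fun ω => abs_nonneg (g ω))
    (by rw [ENNReal.ofReal_ofNat]; exact hf.abs) (by rw [ENNReal.ofReal_ofNat]; exact hg.abs)
  simpa [abs_mul, Real.sqrt_eq_rpow, sq_abs] using h

theorem integral_abs_le_sqrt_integral_sq {Ω : Type*} [MeasurableSpace Ω] {P : Measure Ω}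
    [IsProbabilityMeasure P] {f : Ω → ℝ} (hf : MemLp f 2 P) :
    ∫ ω, |f ω| ∂P ≤ √(∫ ω, f ω ^ 2 ∂P) := by
  simpa using integral_abs_mul_le_sqrt_mul_sqrt hf (memLp_const (1 : ℝ))

theorem measurable_uncurry_projIcc {Ω : Type*} [MeasurableSpace Ω] {a b : ℝ} (hab : a ≤ b)
    {W : ℝ → Ω → ℝ} (hmeas : ∀ s, Measurable (W s))
    (hcont : ∀ ω, ContinuousOn (fun s => W s ω) (Icc a b)) :
    Measurable (uncurry fun s ω => W (projIcc a b hab s) ω) :=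
  measurable_uncurry_of_continuous_of_measurable
    (fun ω => (hcont ω).comp_continuous (continuous_subtype_val.comp continuous_projIcc)
      fun s => (projIcc a b hab s).2)
    fun _ => hmeas _

theorem sq_integral_eq_integral_prod {S : Type*} [MeasurableSpace S] {μ : Measure S} [SFinite μ]
    (f : S → ℝ) : (∫ s, f s ∂μ) ^ 2 = ∫ p, f p.1 * f p.2 ∂(μ.prod μ) := by
  rw [sq, integral_prod_mul]

section SecondMoment

variable {S Ω : Type*} [MeasurableSpace S] [MeasurableSpace Ω] {μ : Measure S}
  {P : Measure Ω} [IsProbabilityMeasure P] {X : S → Ω → ℝ}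

theorem integrable_uncurry_of_integrable_sqrt_integral_sq (hX : Measurable (uncurry X))
    (hL2 : ∀ s, MemLp (X s) 2 P) (hσ : Integrable (fun s => √(∫ ω, X s ω ^ 2 ∂P)) μ) :
    Integrable (uncurry X) (μ.prod P) := by
  rw [integrable_prod_iff hX.aestronglyMeasurable]
  refine ⟨ae_of_all _ fun s => (hL2 s).integrable one_le_two,
    hσ.mono' hX.norm.aestronglyMeasurable.integral_prod_right' (ae_of_all _ fun s => ?_)⟩
  rw [Real.norm_of_nonneg (integral_nonneg fun ω => norm_nonneg _)]
  exact integral_abs_le_sqrt_integral_sq (hL2 s)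

theorem integrable_mul_of_integrable_sqrt_integral_sq (hX : Measurable (uncurry X))
    (hL2 : ∀ s, MemLp (X s) 2 P) (hσ : Integrable (fun s => √(∫ ω, X s ω ^ 2 ∂P)) μ) :
    Integrable (fun z : (S × S) × Ω => X z.1.1 z.2 * X z.1.2 z.2) ((μ.prod μ).prod P) := by
  have hmeas : Measurable fun z : (S × S) × Ω => X z.1.1 z.2 * X z.1.2 z.2 :=
    (hX.comp (measurable_fst.fst.prodMk measurable_snd)).mul
      (hX.comp (measurable_fst.snd.prodMk measurable_snd))
  rw [integrable_prod_iff hmeas.aestronglyMeasurable]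
  refine ⟨ae_of_all _ fun p => (hL2 p.1).integrable_mul (hL2 p.2),
    (hσ.mul_prod hσ).mono' hmeas.norm.aestronglyMeasurable.integral_prod_right'
      (ae_of_all _ fun p => ?_)⟩
  rw [Real.norm_of_nonneg (integral_nonneg fun ω => norm_nonneg _)]
  exact integral_abs_mul_le_sqrt_mul_sqrt (hL2 p.1) (hL2 p.2)

variable [SFinite μ]

theorem ae_integrable_of_integrable_sqrt_integral_sq (hX : Measurable (uncurry X))
    (hL2 : ∀ s, MemLp (X s) 2 P) (hσ : Integrable (fun s => √(∫ ω, X s ω ^ 2 ∂P)) μ) :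
    ∀ᵐ ω ∂P, Integrable (fun s => X s ω) μ :=
  (integrable_uncurry_of_integrable_sqrt_integral_sq hX hL2 hσ).prod_left_ae

theorem memLp_two_integral_of_integrable_sqrt_integral_sq (hX : Measurable (uncurry X))
    (hL2 : ∀ s, MemLp (X s) 2 P) (hσ : Integrable (fun s => √(∫ ω, X s ω ^ 2 ∂P)) μ) :
    MemLp (fun ω => ∫ s, X s ω ∂μ) 2 P := by
  have hmeas : AEStronglyMeasurable (fun ω => ∫ s, X s ω ∂μ) P :=
    (integrable_uncurry_of_integrable_sqrt_integral_sq hX hL2 hσ).integral_prod_right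
      |>.aestronglyMeasurable
  refine (memLp_two_iff_integrable_sq hmeas).mpr ?_
  simp only [sq_integral_eq_integral_prod]
  exact (integrable_mul_of_integrable_sqrt_integral_sq hX hL2 hσ).integral_prod_right

theorem integral_sq_integral_eq_of_integrable_sqrt_integral_sq (hX : Measurable (uncurry X))
    (hL2 : ∀ s, MemLp (X s) 2 P) (hσ : Integrable (fun s => √(∫ ω, X s ω ^ 2 ∂P)) μ) :
    ∫ ω, (∫ s, X s ω ∂μ) ^ 2 ∂P = ∫ s, ∫ t, ∫ ω, X s ω * X t ω ∂P ∂μ ∂μ := by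
  have hG := integrable_mul_of_integrable_sqrt_integral_sq hX hL2 hσ
  simp only [sq_integral_eq_integral_prod]
  rw [← integral_integral_swap hG]
  exact integral_prod _ hG.integral_prod_left

end SecondMoment

theorem integral_rpow_mul_min {ρ s : ℝ} (hρ : 0 < ρ) (hρ₁ : ρ ≠ 1)
    (hs : s ∈ Ioc (0 : ℝ) 1) :
    ∫ t in (0 : ℝ)..1, t ^ (ρ - 2) * min s t = (s - s ^ ρ / ρ) / (ρ - 1) := by
  obtain ⟨hs₀, hs₁⟩ := hs
  have hρ₁' : ρ - 1 ≠ 0 := sub_ne_zero.mpr hρ₁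
  have below : ∀ t ∈ uIoc 0 s, t ^ (ρ - 2) * min s t = t ^ (ρ - 1) := fun t ht => by
    rw [uIoc_of_le hs₀.le] at ht
    rw [min_eq_right ht.2, ← rpow_add_one ht.1.ne']
    ring_nf
  have above : EqOn (fun t => t ^ (ρ - 2) * min s t) (fun t => s * t ^ (ρ - 2)) (uIcc s 1) :=
    fun t ht => by
      rw [uIcc_of_le hs₁] at ht
      simp only [min_eq_left ht.1, mul_comm]
  have hcont : ContinuousOn (fun t => t ^ (ρ - 2) * min s t) (uIcc s 1) := by
    rw [uIcc_of_le hs₁]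
    exact (continuousOn_id.rpow_const fun t ht => Or.inl (hs₀.trans_le ht.1).ne').mul
      (continuous_const.min continuous_id).continuousOn
  have hint : IntervalIntegrable (fun t => t ^ (ρ - 2) * min s t) volume 0 s :=
    (intervalIntegral.intervalIntegrable_rpow' (by linarith)).congr_ae
      (ae_restrict_of_forall_mem measurableSet_uIoc fun t ht => (below t ht).symm)
  rw [← intervalIntegral.integral_add_adjacent_intervals hint hcont.intervalIntegrable,
    intervalIntegral.integral_congr_ae (ae_of_all _ below), intervalIntegral.integral_congr above,
    intervalIntegral.integral_const_mul, integral_rpow (Or.inl (by linarith)),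
    integral_rpow (Or.inr ⟨fun h => hρ₁ (by linarith), fun h => by
      rw [uIcc_of_le hs₁] at h; linarith [h.1]⟩)]
  rw [sub_add_cancel, show ρ - 2 + 1 = ρ - 1 by ring, zero_rpow hρ.ne', one_rpow,
    rpow_sub_one hs₀.ne']
  field_simp
  ring

theorem integral_integral_rpow_mul_rpow_mul_min {ρ : ℝ} (hρ : 1 / 2 < ρ) (hρ₁ : ρ ≠ 1) :
    ∫ s in (0 : ℝ)..1, ∫ t in (0 : ℝ)..1, s ^ (ρ - 2) * t ^ (ρ - 2) * min s t
      = 2 / (ρ * (2 * ρ - 1)) := by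
  have inner : ∀ s ∈ uIoc (0 : ℝ) 1,
      ∫ t in (0 : ℝ)..1, s ^ (ρ - 2) * t ^ (ρ - 2) * min s t
        = (s ^ (ρ - 1) - s ^ (2 * ρ - 2) / ρ) / (ρ - 1) := fun s hs => by
    rw [uIoc_of_le zero_le_one] at hs
    have h₁ : s ^ (ρ - 2) * s = s ^ (ρ - 1) := by
      rw [← rpow_add_one hs.1.ne']
      ring_nf
    have h₂ : s ^ (ρ - 2) * s ^ ρ = s ^ (2 * ρ - 2) := by
      rw [← rpow_add hs.1]
      ring_nf
    simp_rw [mul_assoc]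
    rw [intervalIntegral.integral_const_mul, integral_rpow_mul_min (by linarith) hρ₁ hs,
      ← h₁, ← h₂]
    ring
  rw [intervalIntegral.integral_congr_ae (ae_of_all _ inner), intervalIntegral.integral_div,
    intervalIntegral.integral_sub (intervalIntegral.intervalIntegrable_rpow' (by linarith))
      ((intervalIntegral.intervalIntegrable_rpow' (by linarith)).div_const _),
    intervalIntegral.integral_div, integral_rpow (Or.inl (by linarith)),
    integral_rpow (Or.inl (by linarith))]
  have hρ₀ : ρ ≠ 0 := by linarith
  have h2ρ : 2 * ρ - 1 ≠ 0 := by linarith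
  rw [sub_add_cancel, show 2 * ρ - 2 + 1 = 2 * ρ - 1 by ring, one_rpow, one_rpow,
    zero_rpow hρ₀, zero_rpow h2ρ, sub_zero]
  field_simp
  rw [one_sub_div (by linarith)]
  ring

theorem delta1_second_moment_general
    {Ω : Type*} [MeasurableSpace Ω] (P : Measure Ω) [IsProbabilityMeasure P]
    (W : ℝ → Ω → ℝ)
    (hWmeas : ∀ s, Measurable (W s))
    (hWcont : ∀ ω, ContinuousOn (fun s => W s ω) (Set.Icc 0 1))
    (hWL2 : ∀ s ∈ Set.Icc (0 : ℝ) 1, MemLp (W s) 2 P)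
    (hWcov : ∀ s ∈ Set.Icc (0 : ℝ) 1, ∀ t ∈ Set.Icc (0 : ℝ) 1,
      (∫ ω, W s ω * W t ω ∂P) = min s t)
    (ρ : ℝ) (hρ₁ : 1 / 2 < ρ) (hρ₂ : ρ < 1)
    (Δ₁ : Ω → ℝ)
    (hΔ₁ : ∀ ω, Δ₁ ω = ∫ s in Set.Ioc (0 : ℝ) 1, s ^ (ρ - 2) * W s ω)
    : (∀ᵐ ω ∂P, IntegrableOn (fun s => s ^ (ρ - 2) * W s ω) (Set.Ioc 0 1)) ∧
    MemLp Δ₁ 2 P ∧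
    (∫ ω, (Δ₁ ω) ^ 2 ∂P) = 2 / (ρ * (2 * ρ - 1)) := by
  set X : ℝ → Ω → ℝ := fun s ω => s ^ (ρ - 2) * W (projIcc 0 1 zero_le_one s) ω
  have hX : Measurable (uncurry X) :=
    (measurable_fst.pow_const _).mul (measurable_uncurry_projIcc zero_le_one hWmeas hWcont)
  have hL2 : ∀ s, MemLp (X s) 2 P := fun s =>
    (hWL2 _ (projIcc 0 1 zero_le_one s).2).const_mul _
  have hXW : ∀ s ∈ Ioc (0 : ℝ) 1, X s = fun ω => s ^ (ρ - 2) * W s ω := fun s hs => by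
    simp only [X, projIcc_of_mem zero_le_one (Ioc_subset_Icc_self hs)]
  have hcov : ∀ s ∈ Ioc (0 : ℝ) 1, ∀ t ∈ Ioc (0 : ℝ) 1,
      ∫ ω, X s ω * X t ω ∂P = s ^ (ρ - 2) * t ^ (ρ - 2) * min s t := fun s hs t ht => by
    simp only [hXW s hs, hXW t ht, mul_mul_mul_comm _ (W s _)]
    rw [integral_const_mul, hWcov s (Ioc_subset_Icc_self hs) t (Ioc_subset_Icc_self ht)]
  have hσ : Integrable (fun s => √(∫ ω, X s ω ^ 2 ∂P)) (volume.restrict (Ioc 0 1)) := by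
    refine (intervalIntegral.intervalIntegrable_rpow' (r := ρ - 3 / 2) (by linarith)).1.congr
      (ae_restrict_of_forall_mem measurableSet_Ioc fun s hs => ?_)
    have hvar : s ^ (ρ - 2) * s ^ (ρ - 2) * s = s ^ (ρ - 3 / 2) * s ^ (ρ - 3 / 2) := by
      rw [← rpow_add hs.1, ← rpow_add_one hs.1.ne', ← rpow_add hs.1]
      ring_nf
    simp only [sq, hcov s hs s hs, min_self, hvar, sqrt_mul_self (rpow_nonneg hs.1.le _)]
  have hΔX : Δ₁ = fun ω => ∫ s in Ioc (0 : ℝ) 1, X s ω := funext fun ω =>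
    (hΔ₁ ω).trans (setIntegral_congr_fun measurableSet_Ioc fun s hs => by simp only [hXW s hs])
  refine ⟨?_, hΔX ▸ memLp_two_integral_of_integrable_sqrt_integral_sq hX hL2 hσ, ?_⟩
  · filter_upwards [ae_integrable_of_integrable_sqrt_integral_sq hX hL2 hσ] with ω hω
    exact hω.congr
      (ae_restrict_of_forall_mem measurableSet_Ioc fun s hs => by simp only [hXW s hs])
  · rw [hΔX, integral_sq_integral_eq_of_integrable_sqrt_integral_sq hX hL2 hσ,
      ← integral_integral_rpow_mul_rpow_mul_min hρ₁ hρ₂.ne]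
    simp only [intervalIntegral.integral_of_le zero_le_one]
    refine setIntegral_congr_fun measurableSet_Ioc fun s hs => ?_
    exact setIntegral_congr_fun measurableSet_Ioc fun t ht => hcov s hs t ht

/-- for ρ ∈ (1/2,1), Δ₁ := ∫₀¹ s^{ρ−2} W(s) ds is a.s. defined by an absolutely convergent integral, is square-integrable, and E[Δ₁²] = 2/(ρ(2ρ−1)). -/
theorem delta1_second_moment
    {Ω : Type*} [MeasurableSpace Ω] (P : Measure Ω) [IsProbabilityMeasure P]
    (W : ℝ → Ω → ℝ)
    (hWmeas : ∀ s, Measurable (W s))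
    (hWcont : ∀ ω, ContinuousOn (fun s => W s ω) (Set.Icc 0 1))
    (hWL2 : ∀ s ∈ Set.Icc (0 : ℝ) 1, MemLp (W s) 2 P)
    (hWmean : ∀ s ∈ Set.Icc (0 : ℝ) 1, (∫ ω, W s ω ∂P) = 0)
    (hWcov : ∀ s ∈ Set.Icc (0 : ℝ) 1, ∀ t ∈ Set.Icc (0 : ℝ) 1,
      (∫ ω, W s ω * W t ω ∂P) = min s t)
    (ρ : ℝ) (hρ₁ : 1 / 2 < ρ) (hρ₂ : ρ < 1)
    (Δ₁ : Ω → ℝ)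
    (hΔ₁ : ∀ ω, Δ₁ ω = ∫ s in Set.Ioc (0 : ℝ) 1, s ^ (ρ - 2) * W s ω)
    : (∀ᵐ ω ∂P, IntegrableOn (fun s => s ^ (ρ - 2) * W s ω) (Set.Ioc 0 1)) ∧
    MemLp Δ₁ 2 P ∧
    (∫ ω, (Δ₁ ω) ^ 2 ∂P) = 2 / (ρ * (2 * ρ - 1)) :=
  delta1_second_moment_general P W hWmeas hWcont hWL2 hWcov ρ hρ₁ hρ₂ Δ₁ hΔ₁
end

section
/- For the Burr distributions with survival functions 𝐅̄(x) = (1+x^{1/δ})^{−δ/γ₁} and 𝐆̄(x) = (1+x^{1/δ})^{−δ/γ₂} for x ≥ 0, where δ, γ₁, γ₂ > 0, the truncation probability equals p := ∫_{[0,∞)} 𝐆̄(z) dμ_𝐅(z) = γ₂/(γ₁+γ₂), where μ_𝐅 is the Lebesgue–Stieltjes measure of 𝐅 := 1 − 𝐅̄; equivalently, if 𝐗 and 𝐘 are independent random variables with distribution functions 𝐅 and 𝐆 := 1 − 𝐆̄, then P(𝐗 ≤ 𝐘) = γ₂/(γ₁+γ₂). -/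
/-!
Writing `S_γ(x) = (1 + x^{1/δ})^{-δ/γ}` and `f_γ = -S_γ'` for its density on `(0, ∞)`, the Burr
family satisfies `S_{γ₁} S_{γ₂} = S_γ` with `1/γ = 1/γ₁ + 1/γ₂`, which turns into
`f_{γ₁} S_{γ₂} = γ₂/(γ₁+γ₂) · f_γ`; integrating over `(0, ∞)` gives `γ₂/(γ₁+γ₂)`.
The distribution functions determine `μ_𝐅` and `μ_𝐆` as the measures with densities `f_{γ₁}`
and `f_{γ₂}`, and for independent `𝐗, 𝐘` Fubini gives `P(𝐗 ≤ 𝐘) = ∫ μ_𝐆[x, ∞) dμ_𝐅(x) = ∫ 𝐆̄ dμ_𝐅`.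
-/

open MeasureTheory Filter Set Real ProbabilityTheory Topology

noncomputable section

def burrSurvival (δ γ x : ℝ) : ℝ := (1 + x ^ (1 / δ)) ^ (-(δ / γ))

def burrDensity (δ γ x : ℝ) : ℝ := γ⁻¹ * x ^ (1 / δ - 1) * (1 + x ^ (1 / δ)) ^ (-(δ / γ) - 1)

def burrMeasure (δ γ : ℝ) : Measure ℝ :=
  (volume.restrict (Ioi 0)).withDensity fun x => ENNReal.ofReal (burrDensity δ γ x)

end

variable {δ γ : ℝ}

lemma burrSurvival_zero (hδ : 0 < δ) : burrSurvival δ γ 0 = 1 := by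
  rw [burrSurvival, zero_rpow (one_div_pos.mpr hδ).ne', add_zero, one_rpow]

lemma burrSurvival_nonneg {x : ℝ} (hx : 0 ≤ x) : 0 ≤ burrSurvival δ γ x := by
  unfold burrSurvival; positivity

lemma burrDensity_nonneg (hγ : 0 < γ) {x : ℝ} (hx : 0 ≤ x) : 0 ≤ burrDensity δ γ x := by
  unfold burrDensity; positivity

lemma hasDerivAt_burrSurvival (hδ : δ ≠ 0) {x : ℝ} (hx : 0 < x) :
    HasDerivAt (burrSurvival δ γ) (-burrDensity δ γ x) x := by
  have hbase : 0 < 1 + x ^ (1 / δ) := by positivity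
  have := ((hasDerivAt_rpow_const (p := 1 / δ) (Or.inl hx.ne')).const_add 1).rpow_const
    (p := -(δ / γ)) (Or.inl hbase.ne')
  refine this.congr_deriv ?_
  rw [burrDensity]
  field_simp

lemma continuousWithinAt_burrSurvival (hδ : 0 < δ) {a : ℝ} (ha : 0 ≤ a) :
    ContinuousWithinAt (burrSurvival δ γ) (Ici a) a := by
  have hbase : 0 < 1 + a ^ (1 / δ) := by positivity
  exact ((continuousAt_const.add (continuousAt_id.rpow_const (Or.inr (by positivity)))).rpow_const
    (Or.inl hbase.ne')).continuousWithinAt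

lemma tendsto_burrSurvival_atTop (hδ : 0 < δ) (hγ : 0 < γ) :
    Tendsto (burrSurvival δ γ) atTop (𝓝 0) :=
  (tendsto_rpow_neg_atTop (by positivity)).comp
    (tendsto_atTop_add_const_left atTop 1 (tendsto_rpow_atTop (by positivity)))

lemma lintegral_Ioi_burrDensity (hδ : 0 < δ) (hγ : 0 < γ) {a : ℝ} (ha : 0 ≤ a) :
    ∫⁻ x in Ioi a, ENNReal.ofReal (burrDensity δ γ x) = ENNReal.ofReal (burrSurvival δ γ a) := by
  have hcont := (continuousWithinAt_burrSurvival (γ := γ) hδ ha).neg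
  have hderiv : ∀ x ∈ Ioi a, HasDerivAt (-burrSurvival δ γ) (burrDensity δ γ x) x :=
    fun x hx => by simpa using (hasDerivAt_burrSurvival hδ.ne' (ha.trans_lt hx)).neg
  have hnonneg : ∀ x ∈ Ioi a, 0 ≤ burrDensity δ γ x :=
    fun x hx => burrDensity_nonneg hγ (ha.trans hx.le)
  have hlim : Tendsto (-burrSurvival δ γ) atTop (𝓝 0) := by
    have := (tendsto_burrSurvival_atTop (γ := γ) hδ hγ).neg
    rwa [neg_zero] at this
  rw [← ofReal_integral_eq_lintegral_ofReal
      (integrableOn_Ioi_deriv_of_nonneg hcont hderiv hnonneg hlim)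
      ((ae_restrict_iff' measurableSet_Ioi).mpr (.of_forall hnonneg)),
    integral_Ioi_of_hasDerivAt_of_nonneg hcont hderiv hnonneg hlim, zero_sub, Pi.neg_apply, neg_neg]

lemma burrDensity_mul_burrSurvival {γ₁ γ₂ : ℝ} (hγ₁ : 0 < γ₁) (hγ₂ : 0 < γ₂) {x : ℝ} (hx : 0 < x) :
    burrDensity δ γ₁ x * burrSurvival δ γ₂ x
      = γ₂ / (γ₁ + γ₂) * burrDensity δ (γ₁ * γ₂ / (γ₁ + γ₂)) x := by
  have hbase : 0 < 1 + x ^ (1 / δ) := by positivity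
  have hexp : -(δ / γ₁) - 1 + -(δ / γ₂) = -(δ / (γ₁ * γ₂ / (γ₁ + γ₂))) - 1 := by
    field_simp; ring
  unfold burrDensity burrSurvival
  rw [mul_assoc, ← rpow_add hbase, hexp]
  field_simp

lemma measurable_burrDensity : Measurable (burrDensity δ γ) := by
  unfold burrDensity; fun_prop

lemma measurable_burrSurvival : Measurable (burrSurvival δ γ) := by
  unfold burrSurvival; fun_prop

instance : NullSingletonClass (burrMeasure δ γ) := by
  rw [burrMeasure]; infer_instance

lemma burrMeasure_Ioi (hδ : 0 < δ) (hγ : 0 < γ) {a : ℝ} (ha : 0 ≤ a) :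
    burrMeasure δ γ (Ioi a) = ENNReal.ofReal (burrSurvival δ γ a) := by
  rw [burrMeasure, withDensity_apply _ measurableSet_Ioi,
    Measure.restrict_restrict measurableSet_Ioi,
    inter_eq_left.mpr (Ioi_subset_Ioi ha), lintegral_Ioi_burrDensity hδ hγ ha]

lemma burrMeasure_Iic_zero : burrMeasure δ γ (Iic 0) = 0 := by
  rw [burrMeasure, withDensity_apply _ measurableSet_Iic,
    Measure.restrict_restrict measurableSet_Iic, Iic_inter_Ioi, Ioc_self, Measure.restrict_empty, lintegral_zero_measure]

lemma isProbabilityMeasure_burrMeasure (hδ : 0 < δ) (hγ : 0 < γ) :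
    IsProbabilityMeasure (burrMeasure δ γ) := by
  constructor
  rw [← Iic_union_Ioi (a := 0), measure_union (Iic_disjoint_Ioi le_rfl) measurableSet_Ioi,
    burrMeasure_Iic_zero, burrMeasure_Ioi hδ hγ le_rfl, burrSurvival_zero hδ, zero_add,
    ENNReal.ofReal_one]

lemma burrMeasure_Iic (hδ : 0 < δ) (hγ : 0 < γ) {b : ℝ} (hb : 0 ≤ b) :
    burrMeasure δ γ (Iic b) = ENNReal.ofReal (1 - burrSurvival δ γ b) := by
  have := isProbabilityMeasure_burrMeasure hδ hγ
  rw [← compl_Ioi, measure_compl measurableSet_Ioi (measure_ne_top _ _), measure_univ,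
    burrMeasure_Ioi hδ hγ hb, ENNReal.ofReal_sub _ (burrSurvival_nonneg hb), ENNReal.ofReal_one]

lemma burrMeasure_Ici (hδ : 0 < δ) (hγ : 0 < γ) {a : ℝ} (ha : 0 ≤ a) :
    burrMeasure δ γ (Ici a) = ENNReal.ofReal (burrSurvival δ γ a) := by
  rw [← measure_congr Ioi_ae_eq_Ici, burrMeasure_Ioi hδ hγ ha]

lemma ae_pos_burrMeasure : ∀ᵐ x ∂burrMeasure δ γ, 0 < x :=
  (withDensity_absolutelyContinuous _ _).ae_le (ae_restrict_mem measurableSet_Ioi)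

lemma eq_burrMeasure_of_Iic (hδ : 0 < δ) (hγ : 0 < γ) {μ : Measure ℝ}
    (hμ : ∀ b, 0 ≤ b → μ (Iic b) = ENNReal.ofReal (1 - burrSurvival δ γ b)) :
    μ = burrMeasure δ γ := by
  have := isProbabilityMeasure_burrMeasure hδ hγ
  refine (Measure.ext_of_Iic _ _ fun b => ?_).symm
  rcases le_or_gt 0 b with hb | hb
  · rw [burrMeasure_Iic hδ hγ hb, hμ b hb]
  · have hμ0 : μ (Iic 0) = 0 := by
      rw [hμ 0 le_rfl, burrSurvival_zero hδ, sub_self, ENNReal.ofReal_zero]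
    rw [measure_mono_null (Iic_subset_Iic.mpr hb.le) burrMeasure_Iic_zero,
      measure_mono_null (Iic_subset_Iic.mpr hb.le) hμ0]

lemma lintegral_burrSurvival_burrMeasure (hδ : 0 < δ) {γ₁ γ₂ : ℝ} (hγ₁ : 0 < γ₁) (hγ₂ : 0 < γ₂) :
    ∫⁻ x, ENNReal.ofReal (burrSurvival δ γ₂ x) ∂burrMeasure δ γ₁
      = ENNReal.ofReal (γ₂ / (γ₁ + γ₂)) := by
  have hγ : 0 < γ₁ * γ₂ / (γ₁ + γ₂) := by positivity
  rw [burrMeasure, lintegral_withDensity_eq_lintegral_mul _ measurable_burrDensity.ennreal_ofReal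
    measurable_burrSurvival.ennreal_ofReal]
  calc ∫⁻ x in Ioi 0, ENNReal.ofReal (burrDensity δ γ₁ x) * ENNReal.ofReal (burrSurvival δ γ₂ x)
      = ∫⁻ x in Ioi 0, ENNReal.ofReal (γ₂ / (γ₁ + γ₂))
          * ENNReal.ofReal (burrDensity δ (γ₁ * γ₂ / (γ₁ + γ₂)) x) := by
        refine setLIntegral_congr_fun measurableSet_Ioi fun x hx => ?_
        rw [← ENNReal.ofReal_mul (burrDensity_nonneg hγ₁ hx.le),
          burrDensity_mul_burrSurvival hγ₁ hγ₂ hx, ENNReal.ofReal_mul (by positivity)]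
    _ = ENNReal.ofReal (γ₂ / (γ₁ + γ₂)) := by
        rw [lintegral_const_mul _ measurable_burrDensity.ennreal_ofReal,
          lintegral_Ioi_burrDensity hδ hγ le_rfl, burrSurvival_zero hδ, ENNReal.ofReal_one, mul_one]

lemma integral_burrSurvival_burrMeasure (hδ : 0 < δ) {γ₁ γ₂ : ℝ} (hγ₁ : 0 < γ₁) (hγ₂ : 0 < γ₂) :
    ∫ x, burrSurvival δ γ₂ x ∂burrMeasure δ γ₁ = γ₂ / (γ₁ + γ₂) := by
  rw [integral_eq_lintegral_of_nonneg_ae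
      (ae_pos_burrMeasure.mono fun x hx => burrSurvival_nonneg hx.le)
      measurable_burrSurvival.aestronglyMeasurable,
    lintegral_burrSurvival_burrMeasure hδ hγ₁ hγ₂, ENNReal.toReal_ofReal (by positivity)]

lemma ProbabilityTheory.IndepFun.measure_le_eq_lintegral {Ω : Type*} {_ : MeasurableSpace Ω}
    {P : Measure Ω} [IsFiniteMeasure P] {X Y : Ω → ℝ} (hX : Measurable X) (hY : Measurable Y)
    (hXY : IndepFun X Y P) :
    P {ω | X ω ≤ Y ω} = ∫⁻ x, P.map Y (Ici x) ∂P.map X := by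
  have hle : MeasurableSet {p : ℝ × ℝ | p.1 ≤ p.2} := measurableSet_le measurable_fst measurable_snd
  calc P {ω | X ω ≤ Y ω} = P.map (fun ω => (X ω, Y ω)) {p | p.1 ≤ p.2} :=
        (Measure.map_apply (hX.prodMk hY) hle).symm
    _ = ((P.map X).prod (P.map Y)) {p | p.1 ≤ p.2} := by
        rw [(indepFun_iff_map_prod_eq_prod_map_map hX.aemeasurable hY.aemeasurable).mp hXY]
    _ = ∫⁻ x, P.map Y (Ici x) ∂P.map X := Measure.prod_apply hle

theorem burr_truncation_probability_general
    (δ γ₁ γ₂ : ℝ) (hδ : 0 < δ) (hγ₁ : 0 < γ₁) (hγ₂ : 0 < γ₂)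
    (FF GG : ℝ → ℝ)
    (hFFdef : ∀ x ≥ (0 : ℝ), FF x = 1 - (1 + x ^ (1 / δ)) ^ (-(δ / γ₁)))
    (hGGdef : ∀ x ≥ (0 : ℝ), GG x = 1 - (1 + x ^ (1 / δ)) ^ (-(δ / γ₂)))
    (μF μG : Measure ℝ)
    (hμF : ∀ b, μF (Set.Iic b) = ENNReal.ofReal (FF b))
    (hμG : ∀ b, μG (Set.Iic b) = ENNReal.ofReal (GG b)) :
    (∫ z in Set.Ici (0 : ℝ), (1 - GG z) ∂μF) = γ₂ / (γ₁ + γ₂) ∧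
    ∀ (Ω : Type) (_ : MeasurableSpace Ω) (P : Measure Ω), IsProbabilityMeasure P →
      ∀ X Y : Ω → ℝ, Measurable X → Measurable Y → IndepFun X Y P →
        Measure.map X P = μF → Measure.map Y P = μG →
        P {ω | X ω ≤ Y ω} = ENNReal.ofReal (γ₂ / (γ₁ + γ₂)) := by
  obtain rfl : μF = burrMeasure δ γ₁ :=
    eq_burrMeasure_of_Iic hδ hγ₁ fun b hb => by rw [hμF, hFFdef b hb, burrSurvival]
  obtain rfl : μG = burrMeasure δ γ₂ :=
    eq_burrMeasure_of_Iic hδ hγ₂ fun b hb => by rw [hμG, hGGdef b hb, burrSurvival]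
  refine ⟨?_, fun Ω _ P _ X Y hX hY hXY hXlaw hYlaw => ?_⟩
  · calc ∫ z in Ici 0, (1 - GG z) ∂burrMeasure δ γ₁
        = ∫ z in Ici 0, burrSurvival δ γ₂ z ∂burrMeasure δ γ₁ :=
          setIntegral_congr_fun measurableSet_Ici fun z hz => by
            rw [hGGdef z hz, burrSurvival, sub_sub_cancel]
      _ = γ₂ / (γ₁ + γ₂) := by
          rw [Measure.restrict_eq_self_of_ae_mem (s := Ici 0)
              (ae_pos_burrMeasure.mono fun _ hz => le_of_lt hz),
            integral_burrSurvival_burrMeasure hδ hγ₁ hγ₂]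
  · rw [hXY.measure_le_eq_lintegral hX hY, hXlaw, hYlaw,
      ← lintegral_burrSurvival_burrMeasure hδ hγ₁ hγ₂]
    exact lintegral_congr_ae (ae_pos_burrMeasure.mono fun x hx => burrMeasure_Ici hδ hγ₂ hx.le)

/-- For Burr distributions `𝐅̄(x) = (1+x^{1/δ})^{−δ/γ₁}`,
`𝐆̄(x) = (1+x^{1/δ})^{−δ/γ₂}` (`x ≥ 0`, `δ, γ₁, γ₂ > 0`), the truncation probability
equals `p = ∫_{[0,∞)} 𝐆̄ dμ_𝐅 = γ₂/(γ₁+γ₂)`; equivalently, if `𝐗 ⟂ 𝐘` have dfs `𝐅`, `𝐆`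
then `P(𝐗 ≤ 𝐘) = γ₂/(γ₁+γ₂)`. -/
theorem burr_truncation_probability
    (δ γ₁ γ₂ : ℝ) (hδ : 0 < δ) (hγ₁ : 0 < γ₁) (hγ₂ : 0 < γ₂)
    (FF GG : ℝ → ℝ)
    (hFFdef : ∀ x ≥ (0 : ℝ), FF x = 1 - (1 + x ^ (1 / δ)) ^ (-(δ / γ₁)))
    (hFFneg : ∀ x < (0 : ℝ), FF x = 0)
    (hGGdef : ∀ x ≥ (0 : ℝ), GG x = 1 - (1 + x ^ (1 / δ)) ^ (-(δ / γ₂)))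
    (hGGneg : ∀ x < (0 : ℝ), GG x = 0)
    (μF μG : Measure ℝ)
    (hμF : ∀ b, μF (Set.Iic b) = ENNReal.ofReal (FF b))
    (hμG : ∀ b, μG (Set.Iic b) = ENNReal.ofReal (GG b)) :
    (∫ z in Set.Ici (0 : ℝ), (1 - GG z) ∂μF) = γ₂ / (γ₁ + γ₂) ∧
    ∀ (Ω : Type) (_ : MeasurableSpace Ω) (P : Measure Ω), IsProbabilityMeasure P →
      ∀ X Y : Ω → ℝ, Measurable X → Measurable Y → IndepFun X Y P →
        Measure.map X P = μF → Measure.map Y P = μG →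
        P {ω | X ω ≤ Y ω} = ENNReal.ofReal (γ₂ / (γ₁ + γ₂)) :=
  burr_truncation_probability_general δ γ₁ γ₂ hδ hγ₁ hγ₂ FF GG hFFdef hGGdef μF μG hμF hμG
end
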